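/- arXiv:1912.00309 — 5 statements merged into one kernel-verified Lean document; each statement's English description precedes it below -/
import Mathlib

section
/- Let m ≥ 3, i be an integer with 1 ≤ i ≤ m−1, and n be sufficiently large so that the sequence is defined with nonnegative terms (n ≥ 2m−i+1 suffices). Then the sequence π = ((n−1)^i, (2m−i−1)^{m−i}, m^{m−i}, i^{n−2m+i}), consisting of i terms equal to n−1, m−i terms equal to 2m−i−1, m−i terms equal to m, and n−2m+i terms equal to i, is graphic, satisfies d_{2m+1−j} ≥ j for every 1 ≤ j ≤ m−1, but is not potentially ₃C_{2m}-graphic; in particular no realization of π contains cycles of every length r with 3 ≤ r ≤ 2m. -/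
/-- `G` contains a cycle of length `r`. -/
def hasCycleOfLength {V : Type*} (G : SimpleGraph V) (r : ℕ) : Prop :=
  ∃ (v : V) (c : G.Walk v v), c.IsCycle ∧ c.length = r

/-- `G` is a realization of the sequence `d`, i.e. `d` is its degree sequence. -/
def IsDegreeSeq {n : ℕ} (G : SimpleGraph (Fin n)) (d : Fin n → ℕ) : Prop :=
  ∀ i, (G.neighborSet i).ncard = d i

/-- The sequence `d` is graphic: it is the degree sequence of a simple graph. -/
def Graphic {n : ℕ} (d : Fin n → ℕ) : Prop :=
  ∃ G : SimpleGraph (Fin n), IsDegreeSeq G d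

/-- `d` is potentially ₃Cℓ-graphic: some realization contains cycles of every
length `r` with `3 ≤ r ≤ ℓ`. -/
def Pot3C {n : ℕ} (ℓ : ℕ) (d : Fin n → ℕ) : Prop :=
  ∃ G : SimpleGraph (Fin n), IsDegreeSeq G d ∧ ∀ r, 3 ≤ r → r ≤ ℓ → hasCycleOfLength G r

/-- `d` is potentially Cℓ-graphic: some realization contains a cycle of length `ℓ`. -/
def PotC {n : ℕ} (ℓ : ℕ) (d : Fin n → ℕ) : Prop :=
  ∃ G : SimpleGraph (Fin n), IsDegreeSeq G d ∧ hasCycleOfLength G ℓ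

/-- `d` has a realization `G` containing cycles `C₃, …, C_ℓ` on those vertices with
degrees `d 0, …, d (ℓ-1)`: the induced subgraph on some vertex set `S`, whose multiset
of degrees is that of the first `ℓ` terms of `d`, contains cycles of all lengths
from `3` to `ℓ`. -/
def RealizationWithCyclesOn {n : ℕ} (ℓ : ℕ) (d : Fin n → ℕ) : Prop :=
  ∃ (G : SimpleGraph (Fin n)) (S : Finset (Fin n)),
    IsDegreeSeq G d ∧ S.card = ℓ ∧
    S.val.map d = (Finset.univ.filter (fun i : Fin n => (i : ℕ) < ℓ)).val.map d ∧
    ∀ r, 3 ≤ r → r ≤ ℓ → hasCycleOfLength (G.induce (S : Set (Fin n))) r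

/-- The sequence `((n-1)^i, (2m-i-1)^{m-i}, m^{m-i}, i^{n-2m+i})`. -/
def seqEven (m i n : ℕ) : Fin n → ℕ := fun j =>
  if (j : ℕ) < i then n - 1
  else if (j : ℕ) < m then 2 * m - i - 1
  else if (j : ℕ) < 2 * m - i then m
  else i


section Helpers

open SimpleGraph

lemma filter_lt_card (n k : ℕ) (hk : k ≤ n) :
    (Finset.univ.filter (fun v : Fin n => (v : ℕ) < k)).card = k := by
  have h : Finset.univ.filter (fun v : Fin n => (v : ℕ) < k)
      = Finset.univ.map (Fin.castLEEmb hk) := by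
    ext v
    simp only [Finset.mem_filter, Finset.mem_univ, true_and, Finset.mem_map,
      Fin.castLEEmb_apply]
    constructor
    · intro hv; exact ⟨⟨v, hv⟩, by ext; simp⟩
    · rintro ⟨a, rfl⟩; simpa using a.isLt
  rw [h, Finset.card_map, Finset.card_univ, Fintype.card_fin]

lemma getVert_eq_support_getElem {V : Type*} {G : SimpleGraph V} {u v : V} (p : G.Walk u v) :
    ∀ (t : ℕ) (ht : t < p.support.length), p.support[t] = p.getVert t := by
  induction p with
  | nil => intro t ht; simp at ht; subst ht; simp
  | cons h q ih =>
    intro t ht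
    cases t with
    | zero => simp
    | succ s =>
      simp only [SimpleGraph.Walk.support_cons, List.getElem_cons_succ,
        SimpleGraph.Walk.getVert_cons_succ]
      exact ih s (by simpa [SimpleGraph.Walk.length_support] using ht)

lemma cycle_getVert_inj {V : Type*} {G : SimpleGraph V} {v : V} {c : G.Walk v v}
    (hc : c.IsCycle) {a b : ℕ} (ha1 : 1 ≤ a) (ha2 : a ≤ c.length)
    (hb1 : 1 ≤ b) (hb2 : b ≤ c.length) (h : c.getVert a = c.getVert b) : a = b := by
  have hlen : c.support.length = c.length + 1 := SimpleGraph.Walk.length_support c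
  have htl : c.support.tail.length = c.length := by
    rw [List.length_tail, hlen]; omega
  have h1 : c.support.tail[a-1]'(by omega) = c.getVert a := by
    rw [List.getElem_tail, getVert_eq_support_getElem c (a-1+1) (by omega)]
    congr 1
    omega
  have h2 : c.support.tail[b-1]'(by omega) = c.getVert b := by
    rw [List.getElem_tail, getVert_eq_support_getElem c (b-1+1) (by omega)]
    congr 1
    omega
  have := (hc.support_nodup.getElem_inj_iff (hi := by omega) (hj := by omega)).mp
    (h1.trans (h.trans h2.symm))
  omega

lemma cycle_two_nbrs {V : Type*} {G : SimpleGraph V} {v : V} {c : G.Walk v v}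
    (hc : c.IsCycle) {x : V} (hx : x ∈ c.support) :
    ∃ y z : V, y ≠ z ∧ ∀ w, c.toSubgraph.Adj x w ↔ (w = y ∨ w = z) := by
  classical
  have hL3 : 3 ≤ c.length := hc.three_le_length
  obtain ⟨t0, ht0, ht0L⟩ := Walk.mem_support_iff_exists_getVert.mp hx
  obtain ⟨t, ht1, ht2, htx⟩ : ∃ t, 1 ≤ t ∧ t ≤ c.length ∧ c.getVert t = x := by
    by_cases h0 : t0 = 0
    · exact ⟨c.length, by omega, le_rfl,
        by rw [Walk.getVert_length, ← ht0, h0, Walk.getVert_zero]⟩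
    · exact ⟨t0, by omega, ht0L, ht0⟩
  have hv0 : c.getVert 0 = c.getVert c.length := by
    rw [Walk.getVert_zero, Walk.getVert_length]
  refine ⟨c.getVert (t-1), if t = c.length then c.getVert 1 else c.getVert (t+1), ?_, ?_⟩
  · by_cases htL : t = c.length
    · rw [if_pos htL]
      intro hzv
      have := cycle_getVert_inj hc (a := t-1) (b := 1) (by omega) (by omega)
        (by omega) (by omega) hzv
      omega
    · rw [if_neg htL]
      intro hzv
      by_cases ht1' : t = 1
      · have hLz : c.getVert c.length = c.getVert (t+1) := by
          rw [← hv0, ← hzv, ht1']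
        have := cycle_getVert_inj hc (a := c.length) (b := t+1) (by omega) (by omega)
          (by omega) (by omega) hLz
        omega
      · have := cycle_getVert_inj hc (a := t-1) (b := t+1) (by omega) (by omega)
          (by omega) (by omega) hzv
        omega
  · intro w
    rw [Walk.toSubgraph_adj_iff]
    constructor
    · rintro ⟨j, hs, hj⟩
      rw [Sym2.eq_iff] at hs
      rcases hs with ⟨hjx, hjw⟩ | ⟨hjw, hjx⟩
      · by_cases hj0 : j = 0
        · have htL : t = c.length := by
            have : c.getVert t = c.getVert c.length := by
              rw [htx, ← hjx, hj0, hv0]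
            exact cycle_getVert_inj hc ht1 ht2 (by omega) le_rfl this
          right
          rw [if_pos htL, ← hjw, hj0]
        · have hjt : j = t := cycle_getVert_inj hc (by omega) (by omega) ht1 ht2
            (by rw [hjx, htx])
          right
          rw [if_neg (by omega : ¬ t = c.length), ← hjw, hjt]
      · have hjt : j + 1 = t := cycle_getVert_inj hc (by omega) (by omega) ht1 ht2
          (by rw [hjx, htx])
        left
        rw [← hjw]; congr 1; omega
    · rintro (rfl | rfl)
      · exact ⟨t-1, by rw [Nat.sub_add_cancel ht1, htx, Sym2.eq_swap], by omega⟩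
      · by_cases htL : t = c.length
        · refine ⟨0, ?_, by omega⟩
          rw [if_pos htL, Walk.getVert_zero, ← htx, htL, Walk.getVert_length, zero_add]
        · exact ⟨t, by rw [if_neg htL, htx], by omega⟩


def sharpG (m i n : ℕ) : SimpleGraph (Fin n) where
  Adj u v := u ≠ v ∧ (min (u : ℕ) (v : ℕ) < i ∨
    (min (u : ℕ) (v : ℕ) < m ∧ max (u : ℕ) (v : ℕ) < 2 * m - i))
  symm := by
    constructor; rintro u v ⟨h1, h2⟩
    refine ⟨h1.symm, ?_⟩
    rwa [min_comm, max_comm]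
  loopless := ⟨fun u h => h.1 rfl⟩

lemma sharpG_isDegreeSeq (m i n : ℕ) (hm : 3 ≤ m) (hi1 : 1 ≤ i) (hi2 : i ≤ m - 1)
    (hn : 2 * m - i + 1 ≤ n) : IsDegreeSeq (sharpG m i n) (seqEven m i n) := by
  classical
  have him : i + 1 ≤ m := by omega
  intro j
  have hns : (sharpG m i n).neighborSet j
      = ↑(Finset.univ.filter (fun w : Fin n => (sharpG m i n).Adj j w)) := by
    ext w; simp [SimpleGraph.mem_neighborSet]
  rw [hns, Set.ncard_coe_finset]
  rcases lt_or_ge (j : ℕ) i with hj | hj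
  · -- universal vertex
    have hf : Finset.univ.filter (fun w : Fin n => (sharpG m i n).Adj j w) = {j}ᶜ := by
      ext w
      simp only [Finset.mem_filter, Finset.mem_univ, true_and, Finset.mem_compl,
        Finset.mem_singleton, sharpG, ne_eq, Fin.ext_iff]
      omega
    rw [hf, Finset.card_compl, Finset.card_singleton, Fintype.card_fin]
    simp [seqEven, hj]
  rcases lt_or_ge (j : ℕ) m with hj2 | hj2
  · have hf : Finset.univ.filter (fun w : Fin n => (sharpG m i n).Adj j w)
        = (Finset.univ.filter (fun w : Fin n => (w : ℕ) < 2 * m - i)).erase j := by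
      ext w
      simp only [Finset.mem_filter, Finset.mem_univ, true_and, Finset.mem_erase,
        sharpG, ne_eq, Fin.ext_iff]
      omega
    have hjm : j ∈ Finset.univ.filter (fun w : Fin n => (w : ℕ) < 2 * m - i) := by
      simp only [Finset.mem_filter, Finset.mem_univ, true_and]
      omega
    rw [hf, Finset.card_erase_of_mem hjm, filter_lt_card n (2 * m - i) (by omega)]
    simp only [seqEven, if_neg (by omega : ¬ (j : ℕ) < i), if_pos hj2]
  rcases lt_or_ge (j : ℕ) (2 * m - i) with hj3 | hj3
  · have hf : Finset.univ.filter (fun w : Fin n => (sharpG m i n).Adj j w)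
        = Finset.univ.filter (fun w : Fin n => (w : ℕ) < m) := by
      ext w
      simp only [Finset.mem_filter, Finset.mem_univ, true_and, sharpG, ne_eq, Fin.ext_iff]
      omega
    rw [hf, filter_lt_card n m (by omega)]
    simp only [seqEven, if_neg (by omega : ¬ (j : ℕ) < i),
      if_neg (by omega : ¬ (j : ℕ) < m), if_pos hj3]
  · have hf : Finset.univ.filter (fun w : Fin n => (sharpG m i n).Adj j w)
        = Finset.univ.filter (fun w : Fin n => (w : ℕ) < i) := by
      ext w
      simp only [Finset.mem_filter, Finset.mem_univ, true_and, sharpG, ne_eq, Fin.ext_iff]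
      omega
    rw [hf, filter_lt_card n i (by omega)]
    simp only [seqEven, if_neg (by omega : ¬ (j : ℕ) < i),
      if_neg (by omega : ¬ (j : ℕ) < m), if_neg (by omega : ¬ (j : ℕ) < 2 * m - i)]


lemma no_long_cycle (m i n : ℕ) (hm : 3 ≤ m) (hi1 : 1 ≤ i) (hi2 : i ≤ m - 1)
    (hn : 2 * m - i + 1 ≤ n) (G : SimpleGraph (Fin n))
    (hG : IsDegreeSeq G (seqEven m i n)) (v : Fin n) (c : G.Walk v v)
    (hc : c.IsCycle) (hlen : c.length = 2 * m) : False := by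
  classical
  have him : i + 1 ≤ m := by omega
  have hin : i ≤ n := by omega
  -- F1 : small-index vertices are universal
  have F1 : ∀ u : Fin n, (u : ℕ) < i → ∀ w, w ≠ u → G.Adj u w := by
    intro u hu
    have hdeg : (G.neighborSet u).ncard = n - 1 := by
      rw [hG u]; simp [seqEven, hu]
    have hsub : G.neighborSet u ⊆ ↑({u}ᶜ : Finset (Fin n)) := by
      intro w hw
      simp only [Finset.coe_compl, Finset.coe_singleton, Set.mem_compl_iff,
        Set.mem_singleton_iff]
      exact (G.ne_of_adj hw).symm
    have hcc : (↑({u}ᶜ : Finset (Fin n)) : Set (Fin n)).ncard = n - 1 := by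
      rw [Set.ncard_coe_finset, Finset.card_compl, Finset.card_singleton, Fintype.card_fin]
    have heq : G.neighborSet u = ↑({u}ᶜ : Finset (Fin n)) :=
      Set.eq_of_subset_of_ncard_le hsub (by rw [hcc, hdeg]) (Set.toFinite _)
    intro w hw
    have : w ∈ G.neighborSet u := by
      rw [heq]
      simpa using hw
    exact this
  -- F2 : high-index vertices have neighborhood exactly the universal set
  have F2 : ∀ u : Fin n, 2 * m - i ≤ (u : ℕ) →
      G.neighborSet u = ↑(Finset.univ.filter (fun w : Fin n => (w : ℕ) < i)) := by
    intro u hu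
    have hdeg : (G.neighborSet u).ncard = i := by
      rw [hG u]
      simp only [seqEven, if_neg (by omega : ¬ (u : ℕ) < i),
        if_neg (by omega : ¬ (u : ℕ) < m), if_neg (by omega : ¬ (u : ℕ) < 2 * m - i)]
    have hsub : ↑(Finset.univ.filter (fun w : Fin n => (w : ℕ) < i)) ⊆ G.neighborSet u := by
      intro w hw
      simp only [Finset.coe_filter, Finset.mem_univ, true_and, Set.mem_setOf_eq] at hw
      have hne : u ≠ w := by
        intro h; rw [h] at hu; omega
      exact (F1 w hw u hne).symm
    exact (Set.eq_of_subset_of_ncard_le hsub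
      (by rw [hdeg, Set.ncard_coe_finset, filter_lt_card n i hin]) (Set.toFinite _)).symm
  -- the cycle subgraph
  set H := c.toSubgraph with hH
  have hmemverts : ∀ {x y : Fin n}, H.Adj x y → y ∈ c.support := by
    intro x y h
    have := h.snd_mem
    rwa [Walk.mem_verts_toSubgraph] at this
  -- the support finset
  have hL3 : 3 ≤ c.length := hc.three_le_length
  set Sfin := c.support.tail.toFinset with hSfin
  have h1 : c.support.tail.length = c.length := by
    rw [List.length_tail, Walk.length_support]
    omega
  have hvt : v ∈ c.support.tail := by
    have h2 : c.support.tail[c.length - 1]'(by omega) = v := by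
      rw [List.getElem_tail]
      have h3 := getVert_eq_support_getElem c (c.length - 1 + 1)
        (by rw [Walk.length_support]; omega)
      rw [h3]
      have h4 : c.length - 1 + 1 = c.length := by omega
      rw [h4, Walk.getVert_length]
    have h6 : c.support.tail[c.length - 1]'(by omega) ∈ c.support.tail :=
      List.getElem_mem _
    rwa [h2] at h6
  have hsupp_mem : ∀ {x : Fin n}, x ∈ c.support → x ∈ Sfin := by
    intro x hx
    rw [Walk.support_eq_cons] at hx
    rcases List.mem_cons.mp hx with rfl | hx
    · simpa [hSfin] using hvt
    · simpa [hSfin] using hx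
  have hmemS : ∀ {x : Fin n}, x ∈ Sfin → x ∈ c.support := by
    intro x hx
    rw [hSfin, List.mem_toFinset] at hx
    exact List.mem_of_mem_tail hx
  have hScard : Sfin.card = 2 * m := by
    rw [hSfin, List.toFinset_card_of_nodup hc.support_nodup, List.length_tail,
      Walk.length_support, hlen]
    omega
  -- neighborhoods in the cycle
  have hN2 : ∀ x ∈ c.support, (Finset.univ.filter (fun w => H.Adj x w)).card = 2 := by
    intro x hx
    obtain ⟨y, z, hyz, hch⟩ := cycle_two_nbrs hc hx
    have : Finset.univ.filter (fun w => H.Adj x w) = {y, z} := by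
      ext w
      simp [hH, hch w]
    rw [this, Finset.card_insert_of_notMem (by simpa using hyz), Finset.card_singleton]
  set AS := Sfin.filter (fun u : Fin n => (u : ℕ) < i) with hAS
  set Lf := Sfin.filter (fun u : Fin n => 2 * m - i ≤ (u : ℕ)) with hLf
  have hAScard : AS.card ≤ i := by
    have : AS ⊆ Finset.univ.filter (fun w : Fin n => (w : ℕ) < i) := by
      intro w hw
      simp only [hAS, Finset.mem_filter] at hw ⊢
      exact ⟨Finset.mem_univ w, hw.2⟩
    calc AS.card ≤ _ := Finset.card_le_card this
      _ = i := filter_lt_card n i hin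
  have hLfcard : i ≤ Lf.card := by
    have hLsub : Lf ⊆ Sfin := Finset.filter_subset _ _
    have hsplit : (Sfin \ Lf).card + Lf.card = Sfin.card :=
      Finset.card_sdiff_add_card_eq_card hLsub
    have hneg : (Sfin \ Lf).card ≤ 2 * m - i := by
      have hsub2 : Sfin \ Lf ⊆ Finset.univ.filter (fun w : Fin n => (w : ℕ) < 2 * m - i) := by
        intro w hw
        rw [Finset.mem_sdiff] at hw
        have : ¬ (2 * m - i ≤ (w : ℕ)) := fun hcon =>
          hw.2 (Finset.mem_filter.mpr ⟨hw.1, hcon⟩)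
        simp only [Finset.mem_filter]
        exact ⟨Finset.mem_univ w, by omega⟩
      calc _ ≤ _ := Finset.card_le_card hsub2
        _ = 2 * m - i := filter_lt_card n (2 * m - i) (by omega)
    omega
  -- neighbours of low vertices are universal vertices on the cycle
  have hLnbr : ∀ x ∈ Lf, Finset.univ.filter (fun w => H.Adj x w) ⊆ AS := by
    intro x hx w hw
    simp only [Finset.mem_filter, Finset.mem_univ, true_and] at hw
    have hxS := Finset.mem_filter.mp hx
    have hwG : G.Adj x w := hw.adj_sub
    have hwi : (w : ℕ) < i := by
      have : w ∈ G.neighborSet x := hwG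
      rw [F2 x hxS.2] at this
      simpa using this
    exact Finset.mem_filter.mpr ⟨hsupp_mem (hmemverts hw), hwi⟩
  have key : ∀ x ∈ Lf, (AS.filter (fun w => H.Adj x w)).card = 2 := by
    intro x hx
    have : AS.filter (fun w => H.Adj x w) = Finset.univ.filter (fun w => H.Adj x w) := by
      ext w
      simp only [Finset.mem_filter, Finset.mem_univ, true_and]
      refine ⟨fun h => h.2, fun h => ⟨?_, h⟩⟩
      have := hLnbr x hx (Finset.mem_filter.mpr ⟨Finset.mem_univ w, h⟩)
      exact this
    rw [this]
    exact hN2 x (hmemS (Finset.mem_filter.mp hx).1)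
  -- double counting
  have hsum1 : ∑ x ∈ Lf, (AS.filter (fun w => H.Adj x w)).card = 2 * Lf.card := by
    rw [Finset.sum_congr rfl key, Finset.sum_const, smul_eq_mul, mul_comm]
  have hswap : ∑ x ∈ Lf, (AS.filter (fun w => H.Adj x w)).card
      = ∑ w ∈ AS, (Lf.filter (fun x => H.Adj x w)).card := by
    simp only [Finset.card_filter]
    exact Finset.sum_comm
  have hub : ∀ w ∈ AS, (Lf.filter (fun x => H.Adj x w)).card ≤ 2 := by
    intro w hw
    have hsub3 : Lf.filter (fun x => H.Adj x w) ⊆ Finset.univ.filter (fun x => H.Adj w x) := by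
      intro x hx
      simp only [Finset.mem_filter, Finset.mem_univ, true_and] at hx ⊢
      exact hx.2.symm
    calc _ ≤ _ := Finset.card_le_card hsub3
      _ = 2 := hN2 w (hmemS (Finset.mem_filter.mp hw).1)
  have hsum2 : ∑ w ∈ AS, (Lf.filter (fun x => H.Adj x w)).card ≤ 2 * AS.card := by
    calc ∑ w ∈ AS, (Lf.filter (fun x => H.Adj x w)).card
        ≤ ∑ _w ∈ AS, 2 := Finset.sum_le_sum hub
      _ = 2 * AS.card := by rw [Finset.sum_const, smul_eq_mul, mul_comm]
  -- equalities
  have hLfi : Lf.card = i := by omega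
  have hASi : AS.card = i := by omega
  have hall2 : ∀ w ∈ AS, (Lf.filter (fun x => H.Adj x w)).card = 2 := by
    by_contra hcon
    push_neg at hcon
    obtain ⟨w0, hw0, hw0ne⟩ := hcon
    have hlt : (Lf.filter (fun x => H.Adj x w0)).card < 2 :=
      lt_of_le_of_ne (hub w0 hw0) hw0ne
    have : ∑ w ∈ AS, (Lf.filter (fun x => H.Adj x w)).card < ∑ _w ∈ AS, 2 :=
      Finset.sum_lt_sum (fun w hw => hub w hw) ⟨w0, hw0, hlt⟩
    rw [Finset.sum_const, smul_eq_mul] at this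
    omega
  -- neighbours of universal cycle vertices lie in Lf
  have hAnbr : ∀ w ∈ AS, Finset.univ.filter (fun x => H.Adj w x) ⊆ Lf := by
    intro w hw
    have hsub4 : Lf.filter (fun x => H.Adj x w) ⊆ Finset.univ.filter (fun x => H.Adj w x) := by
      intro x hx
      simp only [Finset.mem_filter, Finset.mem_univ, true_and] at hx ⊢
      exact hx.2.symm
    have heq4 : Lf.filter (fun x => H.Adj x w) = Finset.univ.filter (fun x => H.Adj w x) :=
      Finset.eq_of_subset_of_card_le hsub4 (by
        rw [hall2 w hw, hN2 w (hmemS (Finset.mem_filter.mp hw).1)])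
    rw [← heq4]
    exact Finset.filter_subset _ _
  -- closure
  set T := Lf ∪ AS with hT
  have hclosed : ∀ x y : Fin n, x ∈ T → H.Adj x y → y ∈ T := by
    intro x y hx hxy
    rcases Finset.mem_union.mp hx with hx | hx
    · exact Finset.mem_union.mpr (Or.inr (hLnbr x hx
        (Finset.mem_filter.mpr ⟨Finset.mem_univ y, hxy⟩)))
    · exact Finset.mem_union.mpr (Or.inl (hAnbr x hx
        (Finset.mem_filter.mpr ⟨Finset.mem_univ y, hxy⟩)))
  have hTcard : T.card < Sfin.card := by
    have h5 : T.card ≤ Lf.card + AS.card := Finset.card_union_le _ _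
    omega
  have hTS : T ⊆ Sfin := by
    intro x hx
    rcases Finset.mem_union.mp hx with hx | hx <;>
      exact (Finset.mem_filter.mp hx).1
  have hnotsub : ¬ Sfin ⊆ T := by
    intro hsub5
    have := Finset.card_le_card hsub5
    omega
  obtain ⟨w0, hw0S, hw0T⟩ := Finset.not_subset.mp hnotsub
  obtain ⟨x0, hx0⟩ := Finset.card_pos.mp (by omega : 0 < Lf.card)
  have hx0T : x0 ∈ T := Finset.mem_union.mpr (Or.inl hx0)
  -- connectivity of the cycle yields a contradiction
  have hconn : H.Connected := c.toSubgraph_connected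
  have hx0v : x0 ∈ H.verts :=
    (Walk.mem_verts_toSubgraph c).mpr (hmemS (Finset.mem_filter.mp hx0).1)
  have hw0v : w0 ∈ H.verts :=
    (Walk.mem_verts_toSubgraph c).mpr (hmemS hw0S)
  have hreach : H.coe.Reachable ⟨x0, hx0v⟩ ⟨w0, hw0v⟩ := hconn.preconnected _ _
  obtain ⟨p⟩ := hreach
  have hwalk : ∀ (a b : H.verts) (p : H.coe.Walk a b), (a : Fin n) ∈ T → (b : Fin n) ∈ T := by
    intro a b p
    induction p with
    | nil => exact id
    | cons h q ih =>
      intro ha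
      exact ih (hclosed _ _ ha ((Subgraph.coe_adj _ _ _).mp h))
  exact hw0T (hwalk _ _ p hx0T)



end Helpers

/-- **Sharpness, even case.** For `m ≥ 3`, `1 ≤ i ≤ m-1` and `n ≥ 2m-i+1`, the sequence
`((n-1)^i, (2m-i-1)^{m-i}, m^{m-i}, i^{n-2m+i})` is graphic and satisfies
`d_{2m+1-j} ≥ j` for every `1 ≤ j ≤ m-1` (whenever this term exists), but it is not
potentially ₃C_{2m}-graphic. -/
theorem not_pot3C_even (m i n : ℕ) (hm : 3 ≤ m) (hi1 : 1 ≤ i) (hi2 : i ≤ m - 1)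
    (hn : 2 * m - i + 1 ≤ n) :
    Graphic (seqEven m i n) ∧
    (∀ j : ℕ, ∀ _ : 1 ≤ j, ∀ _ : j ≤ m - 1, ∀ h : 2 * m - j < n,
      j ≤ seqEven m i n ⟨2 * m - j, h⟩) ∧
    ¬ Pot3C (2 * m) (seqEven m i n) := by
  constructor
  · exact ⟨sharpG m i n, sharpG_isDegreeSeq m i n hm hi1 hi2 hn⟩
  constructor
  · intro j hj1 hj2 h
    simp only [seqEven]
    split_ifs <;> omega
  · rintro ⟨G, hG, hcyc⟩
    obtain ⟨v, c, hc, hlen⟩ := hcyc (2 * m) (by omega) le_rfl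
    exact no_long_cycle m i n hm hi1 hi2 hn G hG v c hc hlen
end

section
/- Let m ≥ 2, i be an integer with 1 ≤ i ≤ m, and n be sufficiently large so that the sequence is defined with nonnegative terms (n ≥ 2m−i+2 suffices). Then the sequence π = ((n−1)^i, (2m−i)^{m−i+1}, (m+1)^{m−i}, i^{n−2m+i−1}), consisting of i terms equal to n−1, m−i+1 terms equal to 2m−i, m−i terms equal to m+1, and n−2m+i−1 terms equal to i, is graphic, satisfies d_{2m+2−j} ≥ j for every 1 ≤ j ≤ m, but is not potentially ₃C_{2m+1}-graphic; in particular no realization of π contains cycles of every length r with 3 ≤ r ≤ 2m+1. -/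
/-- The sequence `((n-1)^i, (2m-i)^{m-i+1}, (m+1)^{m-i}, i^{n-2m+i-1})`. -/
def seqOdd (m i n : ℕ) : Fin n → ℕ := fun j =>
  if (j : ℕ) < i then n - 1
  else if (j : ℕ) < m + 1 then 2 * m - i
  else if (j : ℕ) < 2 * m - i + 1 then m + 1
  else i

/-!
Label the vertices `0, …, n-1` in the order of the sequence. In any realization the first `i`
vertices are universal, so every vertex of degree `i` beyond position `2m - i` (a *low* vertex)
is adjacent only to them. Along a cycle both neighbours of a low vertex are universal, while a
universal vertex has only two cycle neighbours; double counting these edges shows that a cycle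
passes through at most as many low vertices as universal ones. It passes through strictly fewer
if it meets a universal vertex and a vertex of neither kind: by connectedness some cycle edge
leaves the universal and low vertices, and it starts at a universal vertex, which then has at most
one low cycle neighbour. Only `2m - i + 1` vertices are not low, so a cycle of length `2m + 1`
passes through at least `i` low vertices, hence through exactly `i` low vertices, all universal
ones and all non-low ones, among them the vertex `i`, which is neither: a contradiction.
-/

open Finset

namespace SimpleGraph

variable {V : Type*} {G : SimpleGraph V}

theorem Subgraph.Connected.exists_adj_mem_notMem {H : G.Subgraph} (hH : H.Connected)
    {T : Set V} {x y : V} (hx : x ∈ H.verts) (hy : y ∈ H.verts) (hxT : x ∈ T) (hyT : y ∉ T) :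
    ∃ a b, H.Adj a b ∧ a ∈ T ∧ b ∉ T := by
  obtain ⟨p, hp⟩ := ((Subgraph.connected_iff_forall_exists_walk_subgraph H).1 hH).2 hx hy
  obtain ⟨d, hd, hdT, hdT'⟩ := p.exists_boundary_dart T hxT hyT
  exact ⟨d.fst, d.snd, hp.2 (Walk.adj_toSubgraph_iff_mem_edges.2 (List.mem_map_of_mem hd)),
    hdT, hdT'⟩

namespace Walk

variable {u : V} {c : G.Walk u u}

theorem IsCycle.card_support_toFinset [DecidableEq V] (hc : c.IsCycle) :
    #c.support.toFinset = c.length := by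
  have hu : u ∈ c.tail.support := c.tail.end_mem_support
  rw [← c.cons_support_tail hc.not_nil, List.toFinset_cons, insert_eq_of_mem (by simp [hu]),
    List.toFinset_card_of_nodup (c.support_tail_of_not_nil hc.not_nil ▸ hc.support_nodup),
    length_support, ← c.length_tail_add_one hc.not_nil]

theorem IsCycle.card_le_two_of_forall_adj (hc : c.IsCycle) {b : V} {T : Finset V}
    (hT : ∀ a ∈ T, c.toSubgraph.Adj b a) : #T ≤ 2 := by
  obtain rfl | ⟨a, ha⟩ := T.eq_empty_or_nonempty
  · simp
  have hb : b ∈ c.support := c.mem_verts_toSubgraph.1 (hT a ha).fst_mem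
  calc #T = (T : Set V).ncard := (Set.ncard_coe_finset T).symm
    _ ≤ (c.toSubgraph.neighborSet b).ncard :=
      Set.ncard_le_ncard (fun a ha => hT a ha) c.finite_neighborSet_toSubgraph
    _ = 2 := hc.ncard_neighborSet_toSubgraph_eq_two hb

open scoped Classical in
theorem IsCycle.card_filter_adj_eq_two (hc : c.IsCycle) {b : V} (hb : b ∈ c.support)
    {T : Finset V} (hT : c.toSubgraph.neighborSet b ⊆ T) :
    #{a ∈ T | c.toSubgraph.Adj b a} = 2 := by
  have : (({a ∈ T | c.toSubgraph.Adj b a} : Finset V) : Set V) = c.toSubgraph.neighborSet b := by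
    ext a
    simp only [coe_filter, Set.mem_ofPred_eq, Subgraph.mem_neighborSet]
    exact ⟨fun h => h.2, fun h => ⟨hT h, h⟩⟩
  rw [← Set.ncard_coe_finset, this, hc.ncard_neighborSet_toSubgraph_eq_two hb]

open scoped Classical in
theorem IsCycle.sum_card_filter_adj_eq [DecidableEq V] (hc : c.IsCycle) {U L : Finset V}
    (hL : ∀ x ∈ L, ∀ y, G.Adj x y → y ∈ U) :
    ∑ b ∈ c.support.toFinset ∩ U, #{a ∈ c.support.toFinset ∩ L | c.toSubgraph.Adj b a} =
      2 * #(c.support.toFinset ∩ L) := by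
  have hcount := sum_card_bipartiteAbove_eq_sum_card_bipartiteBelow
    (s := c.support.toFinset ∩ L) (t := c.support.toFinset ∩ U) (r := c.toSubgraph.Adj)
  have habove : ∀ a ∈ c.support.toFinset ∩ L,
      #((c.support.toFinset ∩ U).bipartiteAbove c.toSubgraph.Adj a) = 2 := by
    intro a ha
    rw [mem_inter, List.mem_toFinset] at ha
    refine hc.card_filter_adj_eq_two ha.1 fun y hy => ?_
    rw [coe_inter, List.coe_toFinset]
    exact ⟨c.mem_verts_toSubgraph.1 hy.snd_mem, hL a ha.2 y hy.adj_sub⟩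
  rw [sum_congr rfl habove, sum_const, smul_eq_mul, mul_comm] at hcount
  rw [hcount]
  refine sum_congr rfl fun b _ => ?_
  simp only [bipartiteBelow, c.toSubgraph.adj_comm b]

theorem IsCycle.card_inter_le_card_inter [DecidableEq V] (hc : c.IsCycle) {U L : Finset V}
    (hL : ∀ x ∈ L, ∀ y, G.Adj x y → y ∈ U) :
    #(c.support.toFinset ∩ L) ≤ #(c.support.toFinset ∩ U) := by
  classical
  have : 2 * #(c.support.toFinset ∩ L) ≤ 2 * #(c.support.toFinset ∩ U) := by
    rw [← hc.sum_card_filter_adj_eq hL, mul_comm, ← smul_eq_mul, ← sum_const]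
    exact sum_le_sum fun b _ => hc.card_le_two_of_forall_adj fun a ha => (mem_filter.1 ha).2
  omega

theorem IsCycle.card_inter_lt_card_inter [DecidableEq V] (hc : c.IsCycle) {U L : Finset V}
    (hL : ∀ x ∈ L, ∀ y, G.Adj x y → y ∈ U) (hU : (c.support.toFinset ∩ U).Nonempty) {w : V}
    (hw : w ∈ c.support) (hwU : w ∉ U) (hwL : w ∉ L) :
    #(c.support.toFinset ∩ L) < #(c.support.toFinset ∩ U) := by
  classical
  obtain ⟨x, hx⟩ := hU
  rw [mem_inter, List.mem_toFinset] at hx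
  obtain ⟨a, b, hab, haUL, hbUL⟩ := c.toSubgraph_connected.exists_adj_mem_notMem
    (T := ↑(U ∪ L)) (c.mem_verts_toSubgraph.2 hx.1) (c.mem_verts_toSubgraph.2 hw)
    (by simp [hx.2]) (by simp [hwU, hwL])
  simp only [coe_union, Set.mem_union, mem_coe, not_or] at haUL hbUL
  have haU : a ∈ U := haUL.resolve_right fun haL => hbUL.1 (hL a haL b hab.adj_sub)
  have ha : a ∈ c.support := c.mem_verts_toSubgraph.1 hab.fst_mem
  have hlt : #{y ∈ c.support.toFinset ∩ L | c.toSubgraph.Adj a y} < 2 := by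
    have hb : b ∉ ({y ∈ c.support.toFinset ∩ L | c.toSubgraph.Adj a y} : Finset V) := by
      simp [hbUL.2]
    have := hc.card_le_two_of_forall_adj (b := a)
      (T := insert b {y ∈ c.support.toFinset ∩ L | c.toSubgraph.Adj a y})
      (by simp [hab])
    rw [card_insert_of_notMem hb] at this
    omega
  have : 2 * #(c.support.toFinset ∩ L) < 2 * #(c.support.toFinset ∩ U) := by
    rw [← hc.sum_card_filter_adj_eq hL, mul_comm, ← smul_eq_mul, ← sum_const]
    refine sum_lt_sum (fun b _ => hc.card_le_two_of_forall_adj fun a ha => (mem_filter.1 ha).2)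
      ⟨a, by simp [ha, haU], hlt⟩
  omega

end Walk
end SimpleGraph

theorem Fin.ncard_setOf_val_lt {n k : ℕ} (hk : k ≤ n) : {v : Fin n | (v : ℕ) < k}.ncard = k := by
  rw [← Finset.coe_filter_univ, Set.ncard_coe_finset, Fin.card_filter_val_lt, min_eq_right hk]

theorem Fin.ncard_setOf_ne_val_lt {n k : ℕ} (hk : k ≤ n) {u : Fin n} (hu : (u : ℕ) < k) :
    {v : Fin n | v ≠ u ∧ (v : ℕ) < k}.ncard = k - 1 := by
  have : {v : Fin n | v ≠ u ∧ (v : ℕ) < k} = {v : Fin n | (v : ℕ) < k} \ {u} := by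
    ext v; simp [and_comm]
  rw [this, Set.ncard_sdiff_singleton_of_mem (show u ∈ {v : Fin n | (v : ℕ) < k} from hu),
    Fin.ncard_setOf_val_lt hk]

section SeqOdd

variable {m i n : ℕ}

theorem seqOdd_of_lt {j : Fin n} (hj : (j : ℕ) < i) : seqOdd m i n j = n - 1 := by
  simp [seqOdd, hj]

theorem seqOdd_of_le (hi : i ≤ m) {j : Fin n} (hj : 2 * m - i + 1 ≤ j) : seqOdd m i n j = i := by
  simp only [seqOdd]
  split_ifs <;> omega

theorem le_seqOdd (hi : i ≤ m) {j : ℕ} (hj : j ≤ m) (h : 2 * m + 1 - j < n) :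
    j ≤ seqOdd m i n ⟨2 * m + 1 - j, h⟩ := by
  simp only [seqOdd]
  split_ifs <;> omega

def seqOddGraph (m i n : ℕ) : SimpleGraph (Fin n) :=
  SimpleGraph.fromRel fun u v => (u : ℕ) < i ∨ (u : ℕ) ≤ m ∧ (v : ℕ) ≤ 2 * m - i

theorem isDegreeSeq_seqOddGraph (hi : i ≤ m) (hn : 2 * m - i + 2 ≤ n) :
    IsDegreeSeq (seqOddGraph m i n) (seqOdd m i n) := by
  intro u
  have hnbr : ∀ s : Set (Fin n), (∀ v, (seqOddGraph m i n).Adj u v ↔ v ∈ s) →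
      (seqOddGraph m i n).neighborSet u = s := fun s hs => Set.ext hs
  simp only [seqOdd]
  split_ifs with h₁ h₂ h₃
  · rw [hnbr {v | v ≠ u ∧ (v : ℕ) < n} (fun v => by simp [seqOddGraph, Fin.ext_iff]; omega),
      Fin.ncard_setOf_ne_val_lt le_rfl u.2]
  · rw [hnbr {v | v ≠ u ∧ (v : ℕ) < 2 * m - i + 1}
      (fun v => by simp [seqOddGraph, Fin.ext_iff]; omega),
      Fin.ncard_setOf_ne_val_lt (by omega) (by omega)]
    omega
  · rw [hnbr {v | (v : ℕ) < m + 1} (fun v => by simp [seqOddGraph, Fin.ext_iff]; omega),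
      Fin.ncard_setOf_val_lt (by omega)]
  · rw [hnbr {v | (v : ℕ) < i} (fun v => by simp [seqOddGraph, Fin.ext_iff]; omega),
      Fin.ncard_setOf_val_lt (by omega)]

variable {G : SimpleGraph (Fin n)}

theorem IsDegreeSeq.isUniversal (hG : IsDegreeSeq G (seqOdd m i n)) {u : Fin n}
    (hu : (u : ℕ) < i) : G.IsUniversal u := by
  classical
  rw [← SimpleGraph.degree_eq_card_sub_one, ← SimpleGraph.card_neighborSet_eq_degree,
    ← Set.toFinset_card, ← Set.ncard_eq_toFinset_card', hG u, seqOdd_of_lt hu, Fintype.card_fin]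

theorem IsDegreeSeq.val_lt_of_adj (hG : IsDegreeSeq G (seqOdd m i n)) (hi : i ≤ m)
    {x y : Fin n} (hx : 2 * m - i + 1 ≤ x) (hxy : G.Adj x y) : (y : ℕ) < i := by
  have hsub : {v : Fin n | (v : ℕ) < i} ⊆ G.neighborSet x := fun v hv =>
    (hG.isUniversal hv (Fin.ne_of_val_ne (by simp at hv; omega))).symm
  have hcard : (G.neighborSet x).ncard ≤ {v : Fin n | (v : ℕ) < i}.ncard := by
    rw [hG x, seqOdd_of_le hi hx, Fin.ncard_setOf_val_lt (by omega)]
  exact (Set.eq_of_subset_of_ncard_le hsub hcard).symm.subset hxy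

theorem IsDegreeSeq.not_hasCycleOfLength (hG : IsDegreeSeq G (seqOdd m i n)) (hi1 : 1 ≤ i)
    (hi2 : i ≤ m) (hn : 2 * m - i + 2 ≤ n) : ¬ hasCycleOfLength G (2 * m + 1) := by
  classical
  rintro ⟨v, c, hc, hlen⟩
  set S := c.support.toFinset
  set U : Finset (Fin n) := {u | (u : ℕ) < i}
  set L : Finset (Fin n) := {x | 2 * m - i + 1 ≤ (x : ℕ)}
  set N : Finset (Fin n) := {x | (x : ℕ) < 2 * m - i + 1}
  have hL : ∀ x ∈ L, ∀ y, G.Adj x y → y ∈ U := fun x hx y hxy => by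
    simp only [U, L, mem_filter_univ] at hx ⊢
    exact hG.val_lt_of_adj hi2 hx hxy
  have hU : #U = i := by rw [Fin.card_filter_val_lt]; omega
  have hN : #N = 2 * m - i + 1 := by rw [Fin.card_filter_val_lt]; omega
  have hSL : S \ L ⊆ N := fun x hx => by
    rw [mem_sdiff, mem_filter_univ, not_le] at hx
    exact (mem_filter_univ _).2 hx.2
  have hS : #(S ∩ L) + #(S \ L) = 2 * m + 1 := by
    rw [card_inter_add_card_sdiff, hc.card_support_toFinset, hlen]
  have hle : #(S ∩ L) ≤ #(S ∩ U) := hc.card_inter_le_card_inter hL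
  have hSU : #(S ∩ U) ≤ #U := card_le_card inter_subset_right
  have hcard : #(S \ L) ≤ #N := card_le_card hSL
  have hNS : S \ L = N := eq_of_subset_of_card_le hSL (by omega)
  have hw : (⟨i, by omega⟩ : Fin n) ∈ S \ L :=
    hNS ▸ (mem_filter_univ _).2 (show i < 2 * m - i + 1 by omega)
  rw [mem_sdiff, List.mem_toFinset] at hw
  have hlt : #(S ∩ L) < #(S ∩ U) := hc.card_inter_lt_card_inter hL
    (card_pos.1 (show 0 < #(S ∩ U) by omega)) hw.1 (by simp [U]) hw.2
  omega

end SeqOdd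

/-- **Sharpness, odd case.** For `m ≥ 2`, `1 ≤ i ≤ m` and `n ≥ 2m-i+2`, the sequence
`((n-1)^i, (2m-i)^{m-i+1}, (m+1)^{m-i}, i^{n-2m+i-1})` is graphic and satisfies
`d_{2m+2-j} ≥ j` for every `1 ≤ j ≤ m` (whenever this term exists), but it is not
potentially ₃C_{2m+1}-graphic. -/
theorem not_pot3C_odd (m i n : ℕ) (hm : 2 ≤ m) (hi1 : 1 ≤ i) (hi2 : i ≤ m)
    (hn : 2 * m - i + 2 ≤ n) :
    Graphic (seqOdd m i n) ∧
    (∀ j : ℕ, ∀ _ : 1 ≤ j, ∀ _ : j ≤ m, ∀ h : 2 * m + 1 - j < n,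
      j ≤ seqOdd m i n ⟨2 * m + 1 - j, h⟩) ∧
    ¬ Pot3C (2 * m + 1) (seqOdd m i n) := by
  refine ⟨⟨seqOddGraph m i n, isDegreeSeq_seqOddGraph hi2 hn⟩,
    fun j _ hj h => le_seqOdd hi2 hj h, ?_⟩
  rintro ⟨G, hG, hcycles⟩
  exact hG.not_hasCycleOfLength hi1 hi2 hn (hcycles _ (by omega) le_rfl)
end

section
/- Let ℓ ≥ 5 and n ≥ ℓ. The sequence π = (n−1, (ℓ−2)^{ℓ−2}, 1^{n−ℓ+1}), consisting of one term n−1, ℓ−2 terms equal to ℓ−2, and n−ℓ+1 terms equal to 1, is graphic but not potentially C_ℓ-graphic; consequently σ(C_ℓ, n) ≥ σ(π) + 2 = 2n + ℓ² − 5ℓ + 6. -/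
/-- The sequence `(n-1, (ℓ-2)^{ℓ-2}, 1^{n-ℓ+1})`. -/
def seqLB (ℓ n : ℕ) : Fin n → ℕ := fun j =>
  if (j : ℕ) = 0 then n - 1
  else if (j : ℕ) ≤ ℓ - 2 then ℓ - 2
  else 1

/-!
Every vertex of a cycle has degree at least `2`, and in `seqLB ℓ n` only the `ℓ - 1` terms
`d 0, …, d (ℓ - 2)` are at least `2`; so no realization contains a cycle of length `ℓ`.
A realization is the clique on the vertices `0, …, ℓ - 2` with all further vertices pendant
at `0`. Since the sum of a graphic sequence is even, an even `s` above `σ(seqLB ℓ n)` exceeds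
it by at least `2`.
-/

open SimpleGraph Finset

theorem SimpleGraph.Walk.IsCycle.two_le_ncard_neighborSet {V : Type*} [Finite V]
    {G : SimpleGraph V} {u v : V} {c : G.Walk u u} (hc : c.IsCycle) (hv : v ∈ c.support) :
    2 ≤ (G.neighborSet v).ncard :=
  hc.ncard_neighborSet_toSubgraph_eq_two hv ▸
    Set.ncard_le_ncard (c.toSubgraph.neighborSet_subset v) (Set.toFinite _)

theorem SimpleGraph.Walk.IsCycle.length_le_card_two_le_ncard_neighborSet {V : Type*}
    [Fintype V] {G : SimpleGraph V} {u : V} {c : G.Walk u u} (hc : c.IsCycle) :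
    c.length ≤ #{v | 2 ≤ (G.neighborSet v).ncard} := by
  classical
  calc c.length = c.support.tail.toFinset.card := by
        rw [List.toFinset_card_of_nodup hc.support_nodup, List.length_tail, Walk.length_support,
          Nat.add_sub_cancel]
    _ ≤ _ := card_le_card fun v hv => mem_filter_univ v |>.2 <|
        hc.two_le_ncard_neighborSet (List.mem_of_mem_tail (List.mem_toFinset.1 hv))

theorem IsDegreeSeq.even_sum {n : ℕ} {G : SimpleGraph (Fin n)} {d : Fin n → ℕ}
    (hG : IsDegreeSeq G d) : Even (∑ i, d i) := by
  classical
  have hdeg (i : Fin n) : d i = G.degree i := by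
    rw [← hG i, ← card_neighborSet_eq_degree, Set.ncard_eq_toFinset_card', Set.toFinset_card]
  simp only [hdeg, sum_degrees_eq_twice_card_edges, even_two_mul]

section seqLB

variable {ℓ n : ℕ}

def seqLBGraph (ℓ n : ℕ) : SimpleGraph (Fin n) where
  Adj i j := i ≠ j ∧
    ((i : ℕ) = 0 ∨ (j : ℕ) = 0 ∨ ((i : ℕ) ≤ ℓ - 2 ∧ (j : ℕ) ≤ ℓ - 2))
  symm := ⟨fun _ _ h => ⟨h.1.symm, by tauto⟩⟩
  loopless := ⟨fun _ h => h.1 rfl⟩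

theorem isDegreeSeq_seqLBGraph (h : ℓ ≤ n + 1) :
    IsDegreeSeq (seqLBGraph ℓ n) (seqLB ℓ n) := by
  classical
  intro i
  rw [Set.ncard_eq_toFinset_card', ← neighborFinset_def, neighborFinset_eq_filter]
  unfold seqLB
  split_ifs with h0 hm
  · rw [show ({j | (seqLBGraph ℓ n).Adj i j} : Finset _) = univ.erase i by
      ext j; simp [seqLBGraph, Fin.ext_iff]; omega]
    simp
  · rw [show ({j | (seqLBGraph ℓ n).Adj i j} : Finset _) =
        ({j : Fin n | j < ℓ - 1} : Finset _).erase i by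
      ext j; simp [seqLBGraph, Fin.ext_iff]; omega]
    rw [card_erase_of_mem ((mem_filter_univ i).2 (by omega)), Fin.card_filter_val_lt]
    omega
  · rw [show ({j | (seqLBGraph ℓ n).Adj i j} : Finset _) = {⟨0, by omega⟩} by
      ext j; simp [seqLBGraph, Fin.ext_iff]; omega]
    rfl

theorem antitone_seqLB (h : ℓ ≤ n + 1) : Antitone (seqLB ℓ n) := fun i j hij => by
  have : (i : ℕ) ≤ j := hij
  unfold seqLB
  split_ifs <;> omega

theorem card_two_le_seqLB_le (hℓ : 2 ≤ ℓ) : #{i | 2 ≤ seqLB ℓ n i} ≤ ℓ - 1 :=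
  calc #{i | 2 ≤ seqLB ℓ n i} ≤ #{i : Fin n | i < ℓ - 1} := card_le_card fun i hi => by
        rw [mem_filter_univ] at hi ⊢; unfold seqLB at hi; split_ifs at hi <;> omega
    _ ≤ ℓ - 1 := Fin.card_filter_val_lt.trans_le (min_le_right _ _)

theorem not_potC_seqLB : ¬ PotC ℓ (seqLB ℓ n) := by
  rintro ⟨G, hG, v, c, hc, rfl⟩
  have hlen := hc.length_le_card_two_le_ncard_neighborSet
  simp only [hG _] at hlen
  have := hc.three_le_length
  have := card_two_le_seqLB_le (n := n) (by omega : 2 ≤ c.length)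
  omega

theorem sum_seqLB_add_two (h4 : 4 ≤ ℓ) (h : ℓ ≤ n + 1) :
    ∑ i, seqLB ℓ n i + 2 = 2 * n + ℓ ^ 2 - 5 * ℓ + 6 := by
  obtain ⟨m, rfl⟩ : ∃ m, ℓ = m + 2 := ⟨ℓ - 2, by omega⟩
  have hsum : ∑ i, seqLB (m + 2) n i = (n - 1) + m * m + (n - (m + 1)) := by
    simp only [seqLB, Nat.add_sub_cancel]
    rw [Fin.sum_univ_eq_sum_range (fun i => if i = 0 then n - 1 else if i ≤ m then m else 1),
      ← sum_range_add_sum_Ico _ (by omega : m + 1 ≤ n), sum_range_succ',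
      sum_congr (s₁ := range m) rfl (g := fun _ => m) fun i hi => by simp at hi ⊢; omega,
      sum_congr (s₁ := Ico (m + 1) n) rfl (g := fun _ => 1) fun i hi => by
        rw [mem_Ico] at hi; rw [if_neg (by omega), if_neg (by omega)]]
    simp only [sum_const, card_range, Nat.card_Ico, smul_eq_mul, mul_one, if_pos]
    omega
  have hsq : (m + 2) ^ 2 = m * m + 4 * m + 4 := by ring
  have : 2 * m ≤ m * m := Nat.mul_le_mul_right m (by omega)
  omega

end seqLB

/-- **Lower bound for `σ(C_ℓ, n)`.** For `ℓ ≥ 5` and `n ≥ ℓ`, the sequence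
`(n-1, (ℓ-2)^{ℓ-2}, 1^{n-ℓ+1})` is graphic but not potentially `C_ℓ`-graphic;
consequently every even integer `s` such that all graphic sequences of length `n` with
sum at least `s` are potentially `C_ℓ`-graphic satisfies `s ≥ 2n + ℓ² - 5ℓ + 6`. -/
theorem sigma_C_lower (ℓ n : ℕ) (hl : 5 ≤ ℓ) (hn : ℓ ≤ n) :
    Graphic (seqLB ℓ n) ∧
    ¬ PotC ℓ (seqLB ℓ n) ∧
    (∀ s : ℕ, Even s →
      (∀ e : Fin n → ℕ, Antitone e → Graphic e → s ≤ ∑ i, e i → PotC ℓ e) →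
      2 * n + ℓ ^ 2 - 5 * ℓ + 6 ≤ s) := by
  have hreal := isDegreeSeq_seqLBGraph (ℓ := ℓ) (n := n) (by omega)
  refine ⟨⟨_, hreal⟩, not_potC_seqLB, fun s hs hall => ?_⟩
  have hlt : ∑ i, seqLB ℓ n i < s := by
    by_contra! hle
    exact not_potC_seqLB (hall _ (antitone_seqLB (by omega)) ⟨_, hreal⟩ hle)
  obtain ⟨k, hk⟩ := hreal.even_sum
  obtain ⟨t, rfl⟩ := hs
  rw [← sum_seqLB_add_two (by omega) (by omega)]
  omega
end

section
/- Let m ≥ 2 and n ≥ 2m+2. The sequence π = ((n−1)^m, (m+1)^2, m^{n−m−2}), consisting of m terms equal to n−1, two terms equal to m+1, and n−m−2 terms equal to m, is graphic but not potentially C_{2m+2}-graphic; consequently σ(C_{2m+2}, n) ≥ σ(π) + 2 = m(2n − m − 1) + 4. -/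
/-- The sequence `((n-1)^m, (m+1)^2, m^{n-m-2})`. -/
def seqEvenLB (m n : ℕ) : Fin n → ℕ := fun j =>
  if (j : ℕ) < m then n - 1 else if (j : ℕ) < m + 2 then m + 1 else m

open Finset SimpleGraph

section Aux

/-- The explicit realization of `seqEvenLB`. -/
def lbG (m n : ℕ) : SimpleGraph (Fin n) where
  Adj i j := i ≠ j ∧ ((i : ℕ) < m ∨ (j : ℕ) < m ∨ ((i : ℕ) < m + 2 ∧ (j : ℕ) < m + 2))
  symm := by
    constructor
    intro i j ⟨h1, h2⟩
    exact ⟨h1.symm, by tauto⟩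
  loopless := by
    constructor
    intro i ⟨h, _⟩
    exact h rfl

instance (m n : ℕ) : DecidableRel (lbG m n).Adj := fun i j => by
  unfold lbG
  exact inferInstanceAs (Decidable (_ ∧ _))

lemma card_filter_lt (n k : ℕ) (hk : k ≤ n) :
    ((Finset.univ : Finset (Fin n)).filter (fun i : Fin n => (i : ℕ) < k)).card = k := by
  have h : ((Finset.univ : Finset (Fin n)).filter (fun i : Fin n => (i : ℕ) < k))
      = (Finset.range k).attachFin (fun m hm => lt_of_lt_of_le (Finset.mem_range.mp hm) hk) := by
    ext i
    simp [Finset.mem_attachFin]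
  rw [h, Finset.card_attachFin, Finset.card_range]

lemma ncard_setOf_lt (n k : ℕ) (hk : k ≤ n) :
    ({i : Fin n | (i : ℕ) < k}).ncard = k := by
  rw [Set.ncard_eq_toFinset_card']
  have h : ({i : Fin n | (i : ℕ) < k}).toFinset
      = (Finset.univ : Finset (Fin n)).filter (fun i : Fin n => (i : ℕ) < k) := by
    ext i; simp
  rw [h, card_filter_lt n k hk]

lemma lbG_degrees (m n : ℕ) (hm : 2 ≤ m) (hn : 2 * m + 2 ≤ n) (i : Fin n) :
    ((lbG m n).neighborSet i).ncard = seqEvenLB m n i := by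
  have hncard : ((lbG m n).neighborSet i).ncard = ((lbG m n).neighborFinset i).card := by
    rw [Set.ncard_eq_toFinset_card']
    rfl
  rw [hncard]
  unfold seqEvenLB
  by_cases h1 : (i : ℕ) < m
  · rw [if_pos h1]
    have : (lbG m n).neighborFinset i = ({i} : Finset (Fin n))ᶜ := by
      ext j
      simp only [mem_neighborFinset, Finset.mem_compl, Finset.mem_singleton]
      constructor
      · intro ⟨hne, _⟩ hji; exact hne hji.symm
      · intro hji; exact ⟨fun h => hji h.symm, Or.inl h1⟩
    rw [this, Finset.card_compl, Finset.card_singleton, Fintype.card_fin]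
  · rw [if_neg h1]
    by_cases h2 : (i : ℕ) < m + 2
    · rw [if_pos h2]
      have : (lbG m n).neighborFinset i
          = (Finset.univ.filter (fun j : Fin n => (j : ℕ) < m + 2)).erase i := by
        ext j
        simp only [mem_neighborFinset, Finset.mem_erase, Finset.mem_filter, Finset.mem_univ,
          true_and]
        constructor
        · rintro ⟨hne, hor⟩
          refine ⟨fun h => hne h.symm, ?_⟩
          rcases hor with h | h | h <;> omega
        · rintro ⟨hne, hlt⟩
          exact ⟨fun h => hne h.symm, Or.inr (Or.inr ⟨h2, hlt⟩)⟩
      rw [this, Finset.card_erase_of_mem (by simp [h2]), card_filter_lt n (m + 2) (by omega)]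
      omega
    · rw [if_neg h2]
      have : (lbG m n).neighborFinset i
          = Finset.univ.filter (fun j : Fin n => (j : ℕ) < m) := by
        ext j
        simp only [mem_neighborFinset, Finset.mem_filter, Finset.mem_univ, true_and]
        constructor
        · rintro ⟨hne, hor⟩
          rcases hor with h | h | h
          · omega
          · exact h
          · omega
        · intro hlt
          refine ⟨?_, Or.inr (Or.inl hlt)⟩
          intro h
          rw [h] at h2
          omega
      rw [this, card_filter_lt n m (by omega)]

section Structure

variable {m n : ℕ} {G : SimpleGraph (Fin n)}
variable (hm : 2 ≤ m) (hn : 2 * m + 2 ≤ n)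
variable (hdeg : ∀ i, (G.neighborSet i).ncard = seqEvenLB m n i)

include hm hn hdeg

omit hm hn in
lemma struct1 (i : Fin n) (hi : (i : ℕ) < m) (j : Fin n) (hj : j ≠ i) : G.Adj i j := by
  have hsub : G.neighborSet i ⊆ {i}ᶜ := by
    intro x hx
    simp only [Set.mem_compl_iff, Set.mem_singleton_iff]
    exact fun h => G.irrefl (h ▸ hx)
  have hcompl : ({i}ᶜ : Set (Fin n)).ncard = n - 1 := by
    rw [Set.ncard_eq_toFinset_card', Set.toFinset_compl, Set.toFinset_singleton,
      Finset.card_compl, Finset.card_singleton, Fintype.card_fin]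
  have hni : (G.neighborSet i).ncard = n - 1 := by
    rw [hdeg i]; unfold seqEvenLB; rw [if_pos hi]
  have heq : G.neighborSet i = {i}ᶜ :=
    Set.eq_of_subset_of_ncard_le hsub (by rw [hcompl, hni]) (Set.toFinite _)
  have : j ∈ G.neighborSet i := by
    rw [heq]
    simpa using hj
  exact this

lemma struct2 (j : Fin n) (hj : m + 2 ≤ (j : ℕ)) :
    G.neighborSet j = {i : Fin n | (i : ℕ) < m} := by
  have hsub : {i : Fin n | (i : ℕ) < m} ⊆ G.neighborSet j := by
    intro i hi
    simp only [Set.mem_setOf_eq] at hi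
    have hne : j ≠ i := by
      intro h
      rw [h] at hj
      omega
    exact ((struct1 hdeg i hi j hne).symm : G.Adj j i)
  have h1 : ({i : Fin n | (i : ℕ) < m}).ncard = m := ncard_setOf_lt n m (by omega)
  have h2 : (G.neighborSet j).ncard = m := by
    rw [hdeg j]; unfold seqEvenLB
    rw [if_neg (by omega), if_neg (by omega)]
  exact (Set.eq_of_subset_of_ncard_le hsub (by rw [h1, h2]) (Set.toFinite _)).symm

lemma struct3 {u v : Fin n} (huv : G.Adj u v) (hu : m ≤ (u : ℕ)) (hv : m ≤ (v : ℕ)) :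
    (u : ℕ) < m + 2 ∧ (v : ℕ) < m + 2 := by
  constructor
  · by_contra h
    have : v ∈ G.neighborSet u := huv
    rw [struct2 hm hn hdeg u (by omega)] at this
    simp only [Set.mem_setOf_eq] at this
    omega
  · by_contra h
    have : u ∈ G.neighborSet v := huv.symm
    rw [struct2 hm hn hdeg v (by omega)] at this
    simp only [Set.mem_setOf_eq] at this
    omega

end Structure

lemma dropLast_nodup_of_cycle {V : Type*} {G : SimpleGraph V} {v : V} {c : G.Walk v v}
    (hc : c.IsCycle) : c.support.dropLast.Nodup := by
  have hlen : c.support.tail.length = c.length := by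
    have := c.length_support
    have := List.length_tail (l := c.support)
    omega
  have htne : c.support.tail ≠ [] := by
    apply List.ne_nil_of_length_pos
    have := hc.three_le_length
    omega
  have hlast : c.support.tail.getLast htne = v := by
    rw [List.getLast_tail]
    exact c.getLast_support
  have hsplit : c.support.tail.dropLast ++ [v] = c.support.tail := by
    conv_rhs => rw [← List.dropLast_append_getLast htne, hlast]
  have hnd : c.support.tail.Nodup := hc.support_nodup
  rw [← hsplit, List.nodup_append] at hnd
  have hvnot : v ∉ c.support.tail.dropLast := fun hv => hnd.2.2 v hv v (List.mem_singleton_self v) rfl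
  obtain ⟨a, t, ht⟩ : ∃ a t, c.support.tail = a :: t :=
    List.exists_cons_of_ne_nil htne
  rw [c.support_eq_cons, ht]
  rw [ht] at hvnot hnd
  rw [List.dropLast_cons₂, List.nodup_cons]
  exact ⟨hvnot, hnd.1⟩

lemma incidence_le_two {n : ℕ} {G : SimpleGraph (Fin n)} {v : Fin n} {c : G.Walk v v}
    (hcyc : c.IsCycle) (b : Fin n) :
    (c.edges.toFinset.filter (fun e => b ∈ e)).card ≤ 2 := by
  classical
  set D := c.darts.toFinset.filter (fun d => d.fst = b ∨ d.snd = b) with hD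
  have hsurj : Set.SurjOn SimpleGraph.Dart.edge (D : Set (G.Dart))
      ((c.edges.toFinset.filter (fun e => b ∈ e)) : Set (Sym2 (Fin n))) := by
    intro e he
    simp only [Finset.coe_filter, Set.mem_setOf_eq, List.mem_toFinset] at he
    obtain ⟨hel, hbe⟩ := he
    have : e ∈ c.darts.map SimpleGraph.Dart.edge := hel
    obtain ⟨d, hd, rfl⟩ := List.mem_map.mp this
    have hed : d.edge = s(d.fst, d.snd) := rfl
    rw [hed, Sym2.mem_iff] at hbe
    refine ⟨d, ?_, rfl⟩
    simp only [hD, Finset.coe_filter, Set.mem_setOf_eq, List.mem_toFinset]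
    exact ⟨hd, by tauto⟩
  have h1 : (c.edges.toFinset.filter (fun e => b ∈ e)).card ≤ D.card :=
    Finset.card_le_card_of_surjOn _ hsurj
  have hfst : (c.darts.toFinset.filter (fun d => d.fst = b)).card ≤ 1 := by
    rw [Finset.card_le_one]
    intro d1 h1' d2 h2'
    simp only [Finset.mem_filter, List.mem_toFinset] at h1' h2'
    have hnd : (c.darts.map (·.fst)).Nodup := by
      rw [SimpleGraph.Walk.map_fst_darts]
      exact dropLast_nodup_of_cycle hcyc
    exact List.inj_on_of_nodup_map hnd h1'.1 h2'.1 (by rw [h1'.2, h2'.2])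
  have hsnd : (c.darts.toFinset.filter (fun d => d.snd = b)).card ≤ 1 := by
    rw [Finset.card_le_one]
    intro d1 h1' d2 h2'
    simp only [Finset.mem_filter, List.mem_toFinset] at h1' h2'
    have hnd : (c.darts.map (·.snd)).Nodup := by
      rw [SimpleGraph.Walk.map_snd_darts]
      exact hcyc.support_nodup
    exact List.inj_on_of_nodup_map hnd h1'.1 h2'.1 (by rw [h1'.2, h2'.2])
  have hsub : D ⊆ (c.darts.toFinset.filter (fun d => d.fst = b))
      ∪ (c.darts.toFinset.filter (fun d => d.snd = b)) := by
    intro d hd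
    simp only [hD, Finset.mem_filter, List.mem_toFinset] at hd
    rcases hd.2 with h | h
    · exact Finset.mem_union_left _ (Finset.mem_filter.mpr ⟨by simpa using hd.1, h⟩)
    · exact Finset.mem_union_right _ (Finset.mem_filter.mpr ⟨by simpa using hd.1, h⟩)
  calc (c.edges.toFinset.filter (fun e => b ∈ e)).card ≤ D.card := h1
    _ ≤ _ := Finset.card_le_card hsub
    _ ≤ 1 + 1 := le_trans (Finset.card_union_le _ _) (by omega)

lemma no_cycle_lemma {m n : ℕ} {G : SimpleGraph (Fin n)}
    (hm : 2 ≤ m) (hn : 2 * m + 2 ≤ n)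
    (hdeg : ∀ i, (G.neighborSet i).ncard = seqEvenLB m n i)
    {v : Fin n} {c : G.Walk v v} (hcyc : c.IsCycle) (hlen : c.length = 2 * m + 2) :
    False := by
  classical
  set E := c.edges.toFinset with hE
  have hEcard : E.card = 2 * m + 2 := by
    rw [hE, List.toFinset_card_of_nodup hcyc.edges_nodup, SimpleGraph.Walk.length_edges, hlen]
  set f : Sym2 (Fin n) → Fin n := Sym2.lift ⟨fun x y => min x y, fun x y => min_comm x y⟩ with hfdef
  have hf : ∀ x y : Fin n, f s(x, y) = min x y := fun x y => rfl
  have hfmem : ∀ e : Sym2 (Fin n), f e ∈ e := by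
    intro e
    induction e using Sym2.inductionOn with
    | _ x y =>
      rw [hf]
      rcases min_choice x y with h | h <;> rw [h] <;> simp
  set vm : Fin n := ⟨m, by omega⟩ with hvm
  set vm1 : Fin n := ⟨m + 1, by omega⟩ with hvm1
  have key : ∀ e ∈ E.filter (fun e => ¬ ((f e : ℕ) < m)), e = s(vm, vm1) := by
    intro e he
    revert he
    induction e using Sym2.inductionOn with
    | _ x y =>
      intro he
      rw [Finset.mem_filter] at he
      obtain ⟨heE, hbad⟩ := he
      have hadj : G.Adj x y := SimpleGraph.Walk.adj_of_mem_edges c (List.mem_toFinset.mp heE)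
      rw [hf] at hbad
      have hmx : min x y ≤ x := min_le_left x y
      have hmy : min x y ≤ y := min_le_right x y
      rw [Fin.le_def] at hmx hmy
      have hxm : m ≤ (x : ℕ) := by omega
      have hym : m ≤ (y : ℕ) := by omega
      have h3 := struct3 hm hn hdeg hadj hxm hym
      have hne : (x : ℕ) ≠ (y : ℕ) := fun h => hadj.ne (Fin.ext h)
      have hvals : ((x : ℕ) = m ∧ (y : ℕ) = m + 1) ∨ ((x : ℕ) = m + 1 ∧ (y : ℕ) = m) := by
        omega
      rcases hvals with ⟨h1, h2⟩ | ⟨h1, h2⟩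
      · rw [show x = vm from Fin.ext h1, show y = vm1 from Fin.ext h2]
      · rw [show x = vm1 from Fin.ext h1, show y = vm from Fin.ext h2, Sym2.eq_swap]
  have hbadcard : (E.filter (fun e => ¬ ((f e : ℕ) < m))).card ≤ 1 := by
    rw [Finset.card_le_one]
    intro a ha b hb
    rw [key a ha, key b hb]
  have hsplitc := Finset.card_filter_add_card_filter_not
    (s := E) (p := fun e => ((f e : ℕ) < m))
  have hgoodle : (E.filter (fun e => ((f e : ℕ) < m))).card ≤ 2 * m := by
    have hmaps : ∀ e ∈ E.filter (fun e => ((f e : ℕ) < m)),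
        f e ∈ Finset.univ.filter (fun i : Fin n => (i : ℕ) < m) := by
      intro e he
      rw [Finset.mem_filter] at he ⊢
      exact ⟨Finset.mem_univ _, he.2⟩
    have hfib : ∀ b ∈ Finset.univ.filter (fun i : Fin n => (i : ℕ) < m),
        ((E.filter (fun e => ((f e : ℕ) < m))).filter (fun e => f e = b)).card ≤ 2 := by
      intro b _
      have hsub : (E.filter (fun e => ((f e : ℕ) < m))).filter (fun e => f e = b)
          ⊆ E.filter (fun e => b ∈ e) := by
        intro e he
        simp only [Finset.mem_filter] at he ⊢
        exact ⟨he.1.1, he.2 ▸ hfmem e⟩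
      exact le_trans (Finset.card_le_card hsub) (incidence_le_two hcyc b)
    have := Finset.card_le_mul_card_image_of_maps_to hmaps 2 hfib
    rwa [card_filter_lt n m (by omega)] at this
  omega

lemma sum_seqEvenLB (m n : ℕ) (hm : 2 ≤ m) (hn : 2 * m + 2 ≤ n) :
    ∑ i, seqEvenLB m n i = m * (2 * n - m - 1) + 2 := by
  have h1 : ∑ i : Fin n, seqEvenLB m n i
      = ∑ j ∈ Finset.range n, (if j < m then n - 1 else if j < m + 2 then m + 1 else m) :=
    (Fin.sum_univ_eq_sum_range (fun j => if j < m then n - 1 else if j < m + 2 then m + 1 else m)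
      n).symm ▸ rfl
  rw [h1]
  obtain ⟨p, rfl⟩ : ∃ p, n = p + (2 * m + 2) := ⟨n - (2 * m + 2), by omega⟩
  rw [Finset.range_eq_Ico]
  rw [← Finset.sum_Ico_consecutive _ (Nat.zero_le m) (by omega : m ≤ p + (2 * m + 2))]
  rw [← Finset.sum_Ico_consecutive _ (by omega : m ≤ m + 2) (by omega : m + 2 ≤ p + (2 * m + 2))]
  have e1 : ∑ j ∈ Finset.Ico 0 m,
      (if j < m then p + (2 * m + 2) - 1 else if j < m + 2 then m + 1 else m)
      = m * (p + (2 * m + 1)) := by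
    have h : ∀ j ∈ Finset.Ico 0 m,
        (if j < m then p + (2 * m + 2) - 1 else if j < m + 2 then m + 1 else m)
        = p + (2 * m + 1) := by
      intro j hj
      rw [Finset.mem_Ico] at hj
      rw [if_pos hj.2]
      omega
    rw [Finset.sum_congr rfl h, Finset.sum_const, Nat.Ico_zero_eq_range, Finset.card_range,
      smul_eq_mul]
  have e2 : ∑ j ∈ Finset.Ico m (m + 2),
      (if j < m then p + (2 * m + 2) - 1 else if j < m + 2 then m + 1 else m)
      = 2 * (m + 1) := by
    have h : ∀ j ∈ Finset.Ico m (m + 2),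
        (if j < m then p + (2 * m + 2) - 1 else if j < m + 2 then m + 1 else m)
        = m + 1 := by
      intro j hj
      rw [Finset.mem_Ico] at hj
      rw [if_neg (by omega), if_pos hj.2]
    rw [Finset.sum_congr rfl h, Finset.sum_const, Nat.card_Ico, smul_eq_mul]
    congr 1
    omega
  have e3 : ∑ j ∈ Finset.Ico (m + 2) (p + (2 * m + 2)),
      (if j < m then p + (2 * m + 2) - 1 else if j < m + 2 then m + 1 else m)
      = (p + m) * m := by
    have h : ∀ j ∈ Finset.Ico (m + 2) (p + (2 * m + 2)),
        (if j < m then p + (2 * m + 2) - 1 else if j < m + 2 then m + 1 else m)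
        = m := by
      intro j hj
      rw [Finset.mem_Ico] at hj
      rw [if_neg (by omega), if_neg (by omega)]
    rw [Finset.sum_congr rfl h, Finset.sum_const, Nat.card_Ico, smul_eq_mul]
    congr 1
    omega
  rw [e1, e2, e3]
  have e4 : 2 * (p + (2 * m + 2)) - m - 1 = 2 * p + 3 * m + 3 := by omega
  rw [e4]
  ring

end Aux

/-- **Lower bound for `σ(C_{2m+2}, n)`.** For `m ≥ 2` and `n ≥ 2m+2`, the sequence
`((n-1)^m, (m+1)^2, m^{n-m-2})` is graphic but not potentially `C_{2m+2}`-graphic;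
consequently every even integer `s` such that all graphic sequences of length `n` with
sum at least `s` are potentially `C_{2m+2}`-graphic satisfies `s ≥ m(2n - m - 1) + 4`. -/
theorem sigma_C_even_lower (m n : ℕ) (hm : 2 ≤ m) (hn : 2 * m + 2 ≤ n) :
    Graphic (seqEvenLB m n) ∧
    ¬ PotC (2 * m + 2) (seqEvenLB m n) ∧
    (∀ s : ℕ, Even s →
      (∀ e : Fin n → ℕ, Antitone e → Graphic e → s ≤ ∑ i, e i → PotC (2 * m + 2) e) →
      m * (2 * n - m - 1) + 4 ≤ s) := by
  have hgraphic : Graphic (seqEvenLB m n) := ⟨lbG m n, fun i => lbG_degrees m n hm hn i⟩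
  have hnot : ¬ PotC (2 * m + 2) (seqEvenLB m n) := by
    rintro ⟨G, hdeg, v, c, hcyc, hlen⟩
    exact no_cycle_lemma hm hn hdeg hcyc hlen
  refine ⟨hgraphic, hnot, ?_⟩
  intro s hs H
  have hA : Antitone (seqEvenLB m n) := by
    intro i j hij
    have hij' : (i : ℕ) ≤ (j : ℕ) := hij
    unfold seqEvenLB
    split_ifs <;> omega
  have hsum : ∑ i, seqEvenLB m n i = m * (2 * n - m - 1) + 2 := sum_seqEvenLB m n hm hn
  by_contra hcon
  push_neg at hcon
  have hK : Even (m * (2 * n - m - 1)) := by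
    rcases Nat.even_or_odd m with he | ho
    · exact he.mul_right _
    · apply Even.mul_left
      obtain ⟨c, hc⟩ := ho
      exact ⟨n - c - 1, by omega⟩
  obtain ⟨a, ha⟩ := hs
  obtain ⟨b, hb⟩ := hK
  have hsle : s ≤ ∑ i, seqEvenLB m n i := by
    rw [hsum]
    omega
  exact hnot (H (seqEvenLB m n) hA hgraphic hsle)
end

section
/- Let π = (d_1, …, d_n) be a non-increasing sequence of nonnegative integers with d_1 ≤ n−1 and σ(π) = d_1 + ⋯ + d_n even, and let f(π) = max{i : d_i ≥ i}. If the Erdős–Gallai inequality ∑_{i=1}^{t} d_i ≤ t(t−1) + ∑_{i=t+1}^{n} min{t, d_i} holds for every t with 1 ≤ t ≤ f(π), then it holds for every t with 1 ≤ t ≤ n−1, and consequently π is graphic. -/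
/-! With 0-based indices, `d i ≤ i` for every `i ≥ f`; and when every `d i` with `i ≥ k` is at
most `k`, the Erdős–Gallai inequality at `k` implies the one at `k + 1`. So the inequalities up to
`f` give all of them.

Graphicity is then the Erdős–Gallai theorem, proved by induction on the degree sum following
Choudum: lower by one the last positive entry `d s` and the entry `d t` closing the initial block
of maximal entries (with `t < s`). The lowered sequence is still non-increasing and satisfies every
inequality; the only delicate range is `k ≤ t`, where the inequality at `t + 1`, and for small
maximal entries the parity of the degree sum, leave enough slack. A realization of the lowered
sequence yields one of `d` by adding the edge `ts` or, if it is present, by a 2-switch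
`wx ↦ tw, sx`: a non-neighbour `w < s` of `t` exists because `d t ≤ s` (the inequality at `1`),
and a neighbour `x` of `w` outside `N(s) ∪ {s}` because `deg w ≥ deg s`. -/

open Finset

variable {n : ℕ}

-- In the 1-based notation of the statement, `headSum d k = d₁ + ⋯ + d_k` and
-- `cappedTailSum d k = ∑_{i > k} min k dᵢ`.
def headSum (d : Fin n → ℕ) (k : ℕ) : ℕ :=
  ∑ i ∈ univ.filter (fun i : Fin n => (i : ℕ) < k), d i

def cappedTailSum (d : Fin n → ℕ) (k : ℕ) : ℕ :=
  ∑ i ∈ univ.filter (fun i : Fin n => k ≤ (i : ℕ)), min k (d i)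

def ErdosGallaiAt (d : Fin n → ℕ) (k : ℕ) : Prop :=
  headSum d k ≤ k * (k - 1) + cappedTailSum d k

section Sums

variable {M : Type*} [AddCommMonoid M] (f : Fin n → M) {k a : ℕ}

theorem sum_filter_lt_add_sum_filter_le (k : ℕ) :
    ∑ i ∈ univ.filter (fun i : Fin n => (i : ℕ) < k), f i +
      ∑ i ∈ univ.filter (fun i : Fin n => k ≤ (i : ℕ)), f i = ∑ i, f i := by
  simpa only [not_lt] using sum_filter_add_sum_filter_not univ (fun i : Fin n => (i : ℕ) < k) f

theorem sum_filter_lt_eq_add (hka : k ≤ a) :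
    ∑ i ∈ univ.filter (fun i : Fin n => (i : ℕ) < a), f i =
      ∑ i ∈ univ.filter (fun i : Fin n => (i : ℕ) < k), f i +
        ∑ i ∈ univ.filter (fun i : Fin n => k ≤ (i : ℕ) ∧ (i : ℕ) < a), f i := by
  rw [← sum_filter_add_sum_filter_not _ (fun i : Fin n => (i : ℕ) < k), filter_filter,
    filter_filter]
  congr 2 <;> ext i <;> simp only [mem_filter, mem_univ, true_and] <;> omega

theorem sum_filter_le_eq_add (hka : k ≤ a) :
    ∑ i ∈ univ.filter (fun i : Fin n => k ≤ (i : ℕ)), f i =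
      ∑ i ∈ univ.filter (fun i : Fin n => k ≤ (i : ℕ) ∧ (i : ℕ) < a), f i +
        ∑ i ∈ univ.filter (fun i : Fin n => a ≤ (i : ℕ)), f i := by
  rw [← sum_filter_add_sum_filter_not _ (fun i : Fin n => (i : ℕ) < a), filter_filter,
    filter_filter]
  congr 2
  ext i
  simp only [mem_filter, mem_univ, true_and]
  omega

theorem card_filter_le_and_lt (k a : ℕ) :
    #(univ.filter fun i : Fin n => k ≤ (i : ℕ) ∧ (i : ℕ) < a) = min n a - min n k := by
  rcases le_total k a with hka | hak
  · have := sum_filter_lt_eq_add (fun _ : Fin n => 1) hka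
    simp only [sum_const, smul_eq_mul, mul_one, Fin.card_filter_val_lt] at this
    omega
  · rw [filter_false_of_mem (fun i _ => by omega), card_empty]
    omega

end Sums

section MinSplit

variable {ι : Type*} (F : Finset ι) (d : ι → ℕ) (k : ℕ)

theorem sum_min_eq : ∑ i ∈ F, min k (d i) =
    k * #(F.filter (k < d ·)) + ∑ i ∈ F.filter (d · ≤ k), d i := by
  rw [← sum_filter_add_sum_filter_not F (k < d ·)]
  simp only [not_lt]
  rw [sum_congr rfl fun i hi => min_eq_left (mem_filter.1 hi).2.le,
    sum_congr rfl fun i hi => min_eq_right (mem_filter.1 hi).2, sum_const, smul_eq_mul, mul_comm]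

theorem sum_min_le (j : ℕ) : ∑ i ∈ F, min j (d i) ≤
    j * #(F.filter (k < d ·)) + ∑ i ∈ F.filter (d · ≤ k), d i := by
  rw [← sum_filter_add_sum_filter_not F (k < d ·)]
  simp only [not_lt]
  gcongr
  · exact (sum_le_card_nsmul _ _ _ fun i _ => min_le_left j (d i)).trans_eq
      (by rw [smul_eq_mul, mul_comm])
  · exact min_le_right _ _

end MinSplit

theorem headSum_zero (d : Fin n → ℕ) : headSum d 0 = 0 := by
  simp [headSum]

theorem headSum_add_cappedTailSum_of_le {d : Fin n → ℕ} {k : ℕ}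
    (h : ∀ i : Fin n, k ≤ (i : ℕ) → d i ≤ k) : headSum d k + cappedTailSum d k = ∑ i, d i := by
  rw [← sum_filter_lt_add_sum_filter_le d k, headSum, cappedTailSum,
    sum_congr rfl fun i hi => min_eq_right (h i (mem_filter.1 hi).2)]

theorem ErdosGallaiAt.succ {d : Fin n → ℕ} {k : ℕ} (h : ErdosGallaiAt d k)
    (hd : ∀ i : Fin n, k ≤ (i : ℕ) → d i ≤ k) : ErdosGallaiAt d (k + 1) := by
  set B := univ.filter fun i : Fin n => k ≤ (i : ℕ) ∧ (i : ℕ) < k + 1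
  have hhead : headSum d (k + 1) = headSum d k + ∑ i ∈ B, d i :=
    sum_filter_lt_eq_add d k.le_succ
  have htail : cappedTailSum d k = ∑ i ∈ B, d i +
      ∑ i ∈ univ.filter (fun i : Fin n => k + 1 ≤ (i : ℕ)), min k (d i) := by
    rw [cappedTailSum, sum_filter_le_eq_add _ k.le_succ]
    congr 1
    exact sum_congr rfl fun i hi => min_eq_right (hd i (mem_filter.mp hi).2.1)
  have htail_mono : ∑ i ∈ univ.filter (fun i : Fin n => k + 1 ≤ (i : ℕ)), min k (d i) ≤
      cappedTailSum d (k + 1) :=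
    sum_le_sum fun i _ => min_le_min_right _ k.le_succ
  have hB : ∑ i ∈ B, d i ≤ k := by
    calc ∑ i ∈ B, d i ≤ #B * k := sum_le_card_nsmul _ _ _ fun i hi => hd i (mem_filter.mp hi).2.1
      _ ≤ 1 * k := Nat.mul_le_mul_right _ (by rw [card_filter_le_and_lt]; omega)
      _ = k := one_mul k
  have hsq : (k + 1) * (k + 1 - 1) = k * (k - 1) + 2 * k := by
    cases k <;> simp; ring
  unfold ErdosGallaiAt at h ⊢
  omega

theorem erdosGallaiAt_of_erdosGallaiAt_le {d : Fin n → ℕ} (hanti : Antitone d) (f : ℕ)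
    (hf : ∀ i : Fin n, f ≤ (i : ℕ) → d i ≤ i) (hEG : ∀ k, 1 ≤ k → k ≤ f → ErdosGallaiAt d k)
    (k : ℕ) : ErdosGallaiAt d k := by
  have hle : ∀ k ≤ f, ErdosGallaiAt d k := fun k hk => by
    rcases Nat.eq_zero_or_pos k with rfl | hk0
    · simp [ErdosGallaiAt, headSum_zero]
    · exact hEG k hk0 hk
  rcases le_total k f with hkf | hfk
  · exact hle k hkf
  induction k, hfk using Nat.le_induction with
  | base => exact hle f le_rfl
  | succ m hfm ih =>
    refine ih.succ fun i hi => ?_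
    calc d i ≤ d ⟨m, by omega⟩ := hanti (Fin.le_def.mpr hi)
      _ ≤ m := hf _ hfm

theorem apply_le_of_erdosGallaiAt_one {d : Fin n → ℕ} (hanti : Antitone d)
    (hEG : ErdosGallaiAt d 1) (s : Fin n) (hs : ∀ i, s < i → d i = 0) (i : Fin n) :
    d i ≤ s := by
  have hL : d i ≤ headSum d 1 :=
    (hanti (Fin.le_def.2 (Nat.zero_le _))).trans
      (single_le_sum (fun _ _ => Nat.zero_le _) (mem_filter.2 ⟨mem_univ ⟨0, i.pos⟩, zero_lt_one⟩))
  have hR : cappedTailSum d 1 ≤ s := by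
    rw [cappedTailSum, sum_filter_le_eq_add _ (show 1 ≤ (s : ℕ) + 1 by omega)]
    have hmid := sum_le_card_nsmul (univ.filter fun i : Fin n => 1 ≤ (i : ℕ) ∧ (i : ℕ) < s + 1)
      (fun i => min 1 (d i)) 1 fun _ _ => min_le_left _ _
    have htail : ∑ i ∈ univ.filter (fun i : Fin n => (s : ℕ) + 1 ≤ (i : ℕ)), min 1 (d i) = 0 :=
      sum_eq_zero fun i hi => by rw [hs i (Fin.lt_def.2 (mem_filter.1 hi).2), _root_.min_zero]
    rw [card_filter_le_and_lt, smul_eq_mul, mul_one] at hmid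
    omega
  unfold ErdosGallaiAt at hEG
  omega

theorem sum_add_single_add_single (e : Fin n → ℕ) (t s : Fin n) (F : Finset (Fin n)) :
    ∑ i ∈ F, (e + Pi.single t 1 + Pi.single s 1 : Fin n → ℕ) i =
      ∑ i ∈ F, e i + (if t ∈ F then 1 else 0) + (if s ∈ F then 1 else 0) := by
  simp only [Pi.add_apply, sum_add_distrib, sum_pi_single']

theorem headSum_add_single_add_single (e : Fin n → ℕ) (t s : Fin n) (k : ℕ) :
    headSum (e + Pi.single t 1 + Pi.single s 1) k =
      headSum e k + (if (t : ℕ) < k then 1 else 0) + (if (s : ℕ) < k then 1 else 0) := by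
  simp only [headSum, sum_add_single_add_single, mem_filter, mem_univ, true_and]

theorem cappedTailSum_add_single_add_single_le (e : Fin n → ℕ) {t s : Fin n} (hts : t ≠ s)
    (k : ℕ) :
    cappedTailSum (e + Pi.single t 1 + Pi.single s 1) k ≤ cappedTailSum e k +
      (if k ≤ (t : ℕ) ∧ e t < k then 1 else 0) + (if k ≤ (s : ℕ) ∧ e s < k then 1 else 0) := by
  have hpt : ∀ i, min k ((e + Pi.single t 1 + Pi.single s 1 : Fin n → ℕ) i) ≤ min k (e i) +
      (if i = t ∧ e t < k then 1 else 0) + (if i = s ∧ e s < k then 1 else 0) := by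
    intro i
    by_cases hit : i = t
    · subst hit
      simp only [Pi.add_apply, Pi.single_eq_same, Pi.single_eq_of_ne hts, hts, true_and,
        false_and, if_false, add_zero]
      split_ifs <;> omega
    by_cases his : i = s
    · subst his
      simp only [Pi.add_apply, Pi.single_eq_same, Pi.single_eq_of_ne hts.symm, hts.symm,
        true_and, false_and, if_false, add_zero]
      split_ifs <;> omega
    simp [hit, his]
  calc cappedTailSum (e + Pi.single t 1 + Pi.single s 1) k
      ≤ ∑ i ∈ univ.filter (fun i : Fin n => k ≤ (i : ℕ)), (min k (e i) +
          (if i = t ∧ e t < k then 1 else 0) + (if i = s ∧ e s < k then 1 else 0)) :=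
        sum_le_sum fun i _ => hpt i
    _ = _ := by
        simp only [sum_add_distrib, ite_and, sum_ite_eq', mem_filter, mem_univ, true_and,
          cappedTailSum]

namespace SimpleGraph

theorem neighborSet_edge {V : Type*} [DecidableEq V] {a b : V} (hab : a ≠ b) (i : V) :
    (edge a b).neighborSet i = if i = a then {b} else if i = b then {a} else ∅ := by
  ext v
  split_ifs <;> simp [edge_adj] <;> grind

variable {V : Type*} [Finite V] (G : SimpleGraph V)

theorem exists_mem_not_adj_of_ncard_lt (v : V) (S : Finset V)
    (h : (G.neighborSet v).ncard < #S) : ∃ w ∈ S, ¬G.Adj v w := by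
  by_contra! hS
  have := Set.ncard_le_ncard (show (S : Set V) ⊆ G.neighborSet v from hS)
  rw [Set.ncard_coe_finset] at this
  omega

theorem exists_adj_not_adj_of_ncard_le {t s w : V} (hts : G.Adj t s) (htw : ¬G.Adj t w)
    (hwt : w ≠ t) (hdeg : (G.neighborSet s).ncard ≤ (G.neighborSet w).ncard) :
    ∃ x, G.Adj w x ∧ ¬G.Adj s x ∧ x ≠ s := by
  by_contra! h
  have hsub : insert t (G.neighborSet w \ {s}) ⊆ G.neighborSet s \ {w} := by
    rintro x (rfl | ⟨hwx, hxs⟩)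
    · exact ⟨hts.symm, hwt.symm⟩
    · exact ⟨by_contra fun hsx => hxs (h x hwx hsx), (G.ne_of_adj hwx).symm⟩
  have hcard := Set.ncard_le_ncard hsub
  rw [Set.ncard_insert_of_notMem fun ht => htw ht.1.symm] at hcard
  by_cases hws : G.Adj w s
  · rw [Set.ncard_sdiff_singleton_of_mem (show s ∈ G.neighborSet w from hws),
      Set.ncard_sdiff_singleton_of_mem (show w ∈ G.neighborSet s from hws.symm)] at hcard
    have : 0 < (G.neighborSet w).ncard := (Set.ncard_pos (Set.toFinite _)).2 ⟨s, hws⟩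
    omega
  · rw [Set.sdiff_singleton_eq_self (show s ∉ G.neighborSet w from hws),
      Set.sdiff_singleton_eq_self (show w ∉ G.neighborSet s from fun h => hws h.symm)] at hcard
    omega

end SimpleGraph

section Realization

open SimpleGraph

variable {G : SimpleGraph (Fin n)} {e : Fin n → ℕ} {a b t s w x : Fin n}

theorem IsDegreeSeq.sup_edge (hG : IsDegreeSeq G e) (hab : a ≠ b) (h : ¬G.Adj a b) :
    IsDegreeSeq (G ⊔ edge a b) (e + Pi.single a 1 + Pi.single b 1) := by
  intro i
  rw [neighborSet_sup, neighborSet_edge hab]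
  split_ifs with hia hib
  · subst hia
    rw [Set.union_singleton, Set.ncard_insert_of_notMem (show b ∉ G.neighborSet i from h), hG]
    simp [Pi.single_eq_of_ne hab]
  · subst hib
    rw [Set.union_singleton,
      Set.ncard_insert_of_notMem (show a ∉ G.neighborSet i from fun h' => h h'.symm), hG]
    simp [Pi.single_eq_of_ne hab.symm]
  · simp [hG i, hia, hib]

theorem IsDegreeSeq.sdiff_edge (hG : IsDegreeSeq G e) (h : G.Adj a b) :
    IsDegreeSeq (G \ edge a b) (e - Pi.single a 1 - Pi.single b 1) := by
  have hab := G.ne_of_adj h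
  intro i
  rw [neighborSet_sdiff, neighborSet_edge hab]
  split_ifs with hia hib
  · subst hia
    rw [Set.ncard_sdiff_singleton_of_mem (show b ∈ G.neighborSet i from h), hG]
    simp [Pi.single_eq_of_ne hab]
  · subst hib
    rw [Set.ncard_sdiff_singleton_of_mem (show a ∈ G.neighborSet i from h.symm), hG]
    simp [Pi.single_eq_of_ne hab.symm]
  · simp [hG i, hia, hib]

theorem IsDegreeSeq.switch (hG : IsDegreeSeq G e) (hwx : G.Adj w x) (htw : ¬G.Adj t w)
    (hsx : ¬G.Adj s x) (hts : t ≠ s) (htw' : t ≠ w) (hsw : s ≠ w) (hsx' : s ≠ x) :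
    IsDegreeSeq (G \ edge w x ⊔ edge t w ⊔ edge s x) (e + Pi.single t 1 + Pi.single s 1) := by
  have hw : 1 ≤ e w := hG w ▸ (Set.ncard_pos (Set.toFinite _)).2 ⟨x, hwx⟩
  have hx : 1 ≤ e x := hG x ▸ (Set.ncard_pos (Set.toFinite _)).2 ⟨w, hwx.symm⟩
  have hwx' := G.ne_of_adj hwx
  have h := ((hG.sdiff_edge hwx).sup_edge htw' fun h => htw h.1).sup_edge hsx' (by
    simp only [sup_adj, sdiff_adj, edge_adj]
    tauto)
  convert h using 1
  funext i
  simp only [Pi.add_apply, Pi.sub_apply, Pi.single_apply]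
  split_ifs <;> simp_all

theorem IsDegreeSeq.exists_add_single_add_single (hG : IsDegreeSeq G e) (hanti : Antitone e)
    (hts : t < s) (hes : e t < s) :
    ∃ H : SimpleGraph (Fin n), IsDegreeSeq H (e + Pi.single t 1 + Pi.single s 1) := by
  by_cases hadj : G.Adj t s
  · obtain ⟨w, hw, htw⟩ := G.exists_mem_not_adj_of_ncard_lt t ((Iic s).erase t) (by
      rw [hG, card_erase_of_mem (mem_Iic.2 hts.le), Fin.card_Iic]
      omega)
    have hwt : w ≠ t := ne_of_mem_erase hw
    have hws : w < s := lt_of_le_of_ne (mem_Iic.1 (mem_of_mem_erase hw)) (by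
      rintro rfl
      exact htw hadj)
    obtain ⟨x, hwx, hsx, hxs⟩ := G.exists_adj_not_adj_of_ncard_le hadj htw hwt (by
      rw [hG, hG]
      exact hanti hws.le)
    exact ⟨_, hG.switch hwx htw hsx hts.ne hwt.symm hws.ne' hxs.symm⟩
  · exact ⟨_, hG.sup_edge hts.ne hadj⟩

end Realization

structure IsChoudumPair (d : Fin n → ℕ) (t s : Fin n) : Prop where
  lt : t < s
  eq_of_le : ∀ i ≤ t, d i = d t
  lt_of_lt_of_lt : ∀ i, t < i → i < s → d i < d t
  pos : 0 < d s
  eq_zero_of_lt : ∀ i, s < i → d i = 0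

theorem exists_isChoudumPair {d : Fin n → ℕ} (hanti : Antitone d) (hEG : ErdosGallaiAt d 1)
    (hsum : ∑ i, d i ≠ 0) : ∃ t s, IsChoudumPair d t s := by
  obtain ⟨i, -, hi⟩ := exists_ne_zero_of_sum_ne_zero hsum
  have hne : (univ.filter (0 < d ·)).Nonempty :=
    ⟨i, mem_filter.2 ⟨mem_univ _, Nat.pos_of_ne_zero hi⟩⟩
  set s := (univ.filter (0 < d ·)).max' hne
  have hs : 0 < d s := (mem_filter.1 (max'_mem _ hne)).2
  have hs_zero : ∀ i, s < i → d i = 0 := fun i hsi => by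
    by_contra h
    exact (le_max' _ i (mem_filter.2 ⟨mem_univ _, Nat.pos_of_ne_zero h⟩)).not_gt hsi
  have h0s : 0 < (s : ℕ) := by
    have := apply_le_of_erdosGallaiAt_one hanti hEG s hs_zero s
    omega
  have hne' : (univ.filter fun i => i < s ∧ ∀ j ≤ i, d j = d i).Nonempty :=
    ⟨⟨0, s.pos⟩, mem_filter.2 ⟨mem_univ _, Fin.lt_def.2 h0s,
      fun j hj => congrArg d (Fin.ext (Nat.le_zero.1 hj))⟩⟩
  set t := max' _ hne'
  obtain ⟨hts, ht⟩ := (mem_filter.1 (max'_mem _ hne')).2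
  refine ⟨t, s, hts, ht, fun i hti his => ?_, hs, hs_zero⟩
  by_contra! hle
  have hblock : ∀ j ≤ i, d j = d i := fun j hj => by
    refine le_antisymm ?_ (hanti hj)
    rcases le_total j t with hjt | htj
    · exact (ht j hjt).trans_le hle
    · exact (hanti htj).trans hle
  exact (le_max' _ i (mem_filter.2 ⟨mem_univ _, his, hblock⟩)).not_gt hti

namespace IsChoudumPair

variable {d : Fin n → ℕ} {t s : Fin n} {k : ℕ}

theorem le_apply (hP : IsChoudumPair d t s) (hanti : Antitone d) (i : Fin n) : d i ≤ d t :=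
  hP.eq_of_le ⟨0, t.pos⟩ (Fin.le_def.2 (Nat.zero_le _)) ▸ hanti (Fin.le_def.2 (Nat.zero_le _))

theorem sub_add (hP : IsChoudumPair d t s) (hanti : Antitone d) :
    d - Pi.single t 1 - Pi.single s 1 + Pi.single t 1 + Pi.single s 1 = d := by
  have hs := hP.pos
  have ht := hP.le_apply hanti s
  have hts := hP.lt.ne
  funext i
  simp only [Pi.add_apply, Pi.sub_apply, Pi.single_apply]
  split_ifs <;> simp_all <;> omega

theorem antitone_sub (hP : IsChoudumPair d t s) (hanti : Antitone d) :
    Antitone (d - Pi.single t 1 - Pi.single s 1) := by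
  intro i j hij
  have hji := hanti hij
  have hts : (t : ℕ) < s := hP.lt
  simp only [Pi.sub_apply, Pi.single_apply]
  rcases eq_or_lt_of_le hij with rfl | hij
  · exact le_rfl
  by_cases hit : i = t
  · subst hit
    have : d j < d i ∨ j = s := by
      rcases lt_trichotomy j s with hjs | rfl | hjs
      · exact .inl (hP.lt_of_lt_of_lt j hij hjs)
      · exact .inr rfl
      · exact .inl (hP.eq_zero_of_lt j hjs ▸ hP.pos.trans_le (hanti hP.lt.le))
    split_ifs <;> omega
  by_cases his : i = s
  · subst his
    have := hP.eq_zero_of_lt j hij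
    split_ifs <;> subst_vars <;> omega
  split_ifs <;> omega

theorem headSum_eq_mul (hP : IsChoudumPair d t s) (hk : k ≤ t + 1) : headSum d k = k * d t := by
  rw [headSum, sum_congr rfl fun i hi => hP.eq_of_le i (Fin.le_def.2 (by
      have := (mem_filter.1 hi).2
      omega)), sum_const, Fin.card_filter_val_lt, smul_eq_mul, min_eq_right (by omega)]

theorem headSum_lt_of_apply_le (hP : IsChoudumPair d t s) (hanti : Antitone d) (hk : 1 ≤ k)
    (hkt : k ≤ t) (htk : d t ≤ k) : headSum d k < k * (k - 1) + cappedTailSum d k := by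
  have hst : d s ≤ d t := hanti hP.lt.le
  have htail : d t + d s ≤ cappedTailSum d k :=
    calc d t + d s = ∑ i ∈ {t, s}, min k (d i) := by
          rw [sum_pair hP.lt.ne, min_eq_right htk, min_eq_right (hst.trans htk)]
      _ ≤ cappedTailSum d k := sum_le_sum_of_subset (by
          intro i
          simp only [mem_insert, mem_singleton, mem_filter, mem_univ, true_and]
          have : (t : ℕ) < s := hP.lt
          rintro (rfl | rfl) <;> omega)
  have hmul : (k - 1) * d t ≤ (k - 1) * k := Nat.mul_le_mul_left _ htk
  rw [hP.headSum_eq_mul (by omega)]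
  have := hP.pos
  obtain ⟨k, rfl⟩ : ∃ j, k = j + 1 := ⟨k - 1, by omega⟩
  simp only [Nat.add_sub_cancel] at hmul ⊢
  nlinarith

theorem headSum_lt_of_lt_apply (hP : IsChoudumPair d t s) (hEG : ErdosGallaiAt d (t + 1))
    (hkt : k ≤ t) (hkd : k < d t) (hsk : d s ≤ k) :
    headSum d k < k * (k - 1) + cappedTailSum d k := by
  set a := (t : ℕ) + 1 with ha
  set F := univ.filter fun i : Fin n => a ≤ (i : ℕ)
  set c := #(F.filter (k < d ·))
  set T := ∑ i ∈ F.filter (d · ≤ k), d i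
  have hT : 0 < T := hP.pos.trans_le <| single_le_sum (fun _ _ => Nat.zero_le _) <|
    mem_filter.2 ⟨mem_filter.2 ⟨mem_univ _, hP.lt⟩, hsk⟩
  have hRk : cappedTailSum d k = (a - k) * k + (k * c + T) := by
    rw [cappedTailSum, sum_filter_le_eq_add _ (show k ≤ a by omega), sum_min_eq F d k]
    congr 1
    rw [sum_congr rfl fun i hi => (show min k (d i) = k by
        have := (mem_filter.1 hi).2
        rw [hP.eq_of_le i (Fin.le_def.2 (by omega))]
        exact min_eq_left hkd.le),
      sum_const, card_filter_le_and_lt, smul_eq_mul, min_eq_right (show a ≤ n by omega),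
      min_eq_right (show k ≤ n by omega)]
  have hRa : cappedTailSum d a ≤ a * c + T := sum_min_le F d k a
  have hka : k < a := by omega
  unfold ErdosGallaiAt at hEG
  rw [hP.headSum_eq_mul le_rfl, ← ha] at hEG
  rw [hP.headSum_eq_mul hka.le, hRk]
  replace hEG := hEG.trans (Nat.add_le_add_left hRa _)
  generalize d t = D at hEG ⊢
  rcases Nat.eq_zero_or_pos k with rfl | hk
  · simpa
  zify [hk, hka.le, (show 1 ≤ a by omega)] at hEG ⊢
  set q : ℤ := (a : ℤ) - 1 + c
  -- equality at `k` would give `k * (D - q) = T > 0`, while the inequality at `a` gives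
  -- `a * (D - q) ≤ T`
  by_contra! h
  have hDq : q < D := by nlinarith
  nlinarith [mul_lt_mul_of_pos_right (show (k : ℤ) < a by exact_mod_cast hka) (sub_pos.2 hDq)]

theorem headSum_add_le (hP : IsChoudumPair d t s) (hanti : Antitone d)
    (heven : Even (∑ i, d i)) (hEG : ∀ k, ErdosGallaiAt d k) (hk : 1 ≤ k) (hkt : k ≤ t) :
    headSum d k + (if d t ≤ k then 1 else 0) + (if d s ≤ k then 1 else 0) ≤
      k * (k - 1) + cappedTailSum d k := by
  have hst : d s ≤ d t := hanti hP.lt.le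
  by_cases hsk : d s ≤ k
  swap
  · simp only [hsk, show ¬d t ≤ k by omega, if_false, add_zero]
    exact hEG k
  by_cases htk : d t ≤ k
  · have hlt := hP.headSum_lt_of_apply_le hanti hk hkt htk
    have hsum := headSum_add_cappedTailSum_of_le fun i _ => (hP.le_apply hanti i).trans htk
    -- all entries are at most `k`, so the slack has the parity of the degree sum
    obtain ⟨m, hm⟩ := heven
    obtain ⟨q, hq⟩ := Nat.even_mul_pred_self k
    simp only [htk, hsk, if_true]
    omega
  · have := hP.headSum_lt_of_lt_apply (hEG _) hkt (by omega) hsk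
    simp only [htk, hsk, if_true, if_false]
    omega

theorem erdosGallaiAt_sub (hP : IsChoudumPair d t s) (hanti : Antitone d)
    (heven : Even (∑ i, d i)) (hEG : ∀ k, ErdosGallaiAt d k) (k : ℕ) :
    ErdosGallaiAt (d - Pi.single t 1 - Pi.single s 1) k := by
  set e := d - Pi.single t 1 - Pi.single s 1
  have hde : e + Pi.single t 1 + Pi.single s 1 = d := hP.sub_add hanti
  have het : e t + 1 = d t := by
    simpa [Pi.single_eq_of_ne hP.lt.ne] using congrFun hde t
  have hes : e s + 1 = d s := by
    simpa [Pi.single_eq_of_ne hP.lt.ne'] using congrFun hde s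
  have hL := headSum_add_single_add_single e t s k
  have hR := cappedTailSum_add_single_add_single_le e hP.lt.ne k
  rw [hde] at hL hR
  unfold ErdosGallaiAt
  rcases Nat.eq_zero_or_pos k with rfl | hk
  · simp [headSum_zero]
  by_cases hkt : k ≤ t
  · have := hP.headSum_add_le hanti heven hEG hk hkt
    have : (t : ℕ) < s := hP.lt
    split_ifs at * <;> omega
  · have := hEG k
    unfold ErdosGallaiAt at this
    split_ifs at * <;> omega

end IsChoudumPair

theorem graphic_of_forall_erdosGallaiAt {d : Fin n → ℕ} (hanti : Antitone d)
    (heven : Even (∑ i, d i)) (hEG : ∀ k, ErdosGallaiAt d k) : Graphic d := by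
  induction hm : ∑ i, d i using Nat.strong_induction_on generalizing d with
  | _ m ih =>
  rcases Nat.eq_zero_or_pos m with rfl | hpos
  · refine ⟨⊥, fun i => ?_⟩
    simp [sum_eq_zero_iff.1 hm i (mem_univ i)]
  obtain ⟨t, s, hP⟩ := exists_isChoudumPair hanti (hEG 1) (by omega)
  set e := d - Pi.single t 1 - Pi.single s 1
  have hde : e + Pi.single t 1 + Pi.single s 1 = d := hP.sub_add hanti
  have hsum : ∑ i, e i + 2 = m := by
    rw [← hm, ← hde, sum_add_single_add_single]
    simp
  have he : Graphic e := ih (m - 2) (by omega) (hP.antitone_sub hanti)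
    (by
      obtain ⟨r, hr⟩ := heven
      exact ⟨r - 1, by omega⟩)
    (hP.erdosGallaiAt_sub hanti heven hEG) (by omega)
  obtain ⟨G, hG⟩ := he
  have het : e t < s := by
    have := congrFun hde t
    have := apply_le_of_erdosGallaiAt_one hanti (hEG 1) s hP.eq_zero_of_lt t
    simp [Pi.single_eq_of_ne hP.lt.ne] at *
    omega
  obtain ⟨H, hH⟩ := hG.exists_add_single_add_single (hP.antitone_sub hanti) hP.lt het
  exact ⟨H, hde ▸ hH⟩

/-- **Remark after Theorem 2.2 (Erdős–Gallai with fewer inequalities).** Let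
`π = (d₁,…,dₙ)` be a non-increasing sequence of nonnegative integers with `d₁ ≤ n-1` and
even sum, and let `f = max{i : dᵢ ≥ i}` (so, as `π` is non-increasing, `dᵢ ≥ i ↔ i ≤ f`
for `1 ≤ i ≤ n`). If the Erdős–Gallai inequality
`∑_{i=1}^t dᵢ ≤ t(t-1) + ∑_{i=t+1}^n min{t, dᵢ}` holds for every `1 ≤ t ≤ f`, then it
holds for every `1 ≤ t ≤ n-1`, and consequently `π` is graphic. -/
theorem erdos_gallai_partial (n : ℕ) (d : Fin n → ℕ)
    (hanti : Antitone d) (heven : Even (∑ i, d i))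
    (f : ℕ)
    (hf : ∀ i : ℕ, ∀ _ : 1 ≤ i, ∀ _ : i ≤ n, (i ≤ d ⟨i - 1, by omega⟩ ↔ i ≤ f))
    (hEG : ∀ t : ℕ, 1 ≤ t → t ≤ f →
      ∑ i ∈ Finset.univ.filter (fun i : Fin n => (i : ℕ) < t), d i ≤
        t * (t - 1) + ∑ i ∈ Finset.univ.filter (fun i : Fin n => t ≤ (i : ℕ)), min t (d i)) :
    (∀ t : ℕ, 1 ≤ t → t ≤ n - 1 →
      ∑ i ∈ Finset.univ.filter (fun i : Fin n => (i : ℕ) < t), d i ≤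
        t * (t - 1) + ∑ i ∈ Finset.univ.filter (fun i : Fin n => t ≤ (i : ℕ)), min t (d i)) ∧
    Graphic d := by
  have hsmall : ∀ i : Fin n, f ≤ (i : ℕ) → d i ≤ i := fun i hi => by
    have := hf (i + 1) (by omega) i.isLt
    simp only [Nat.add_sub_cancel, Fin.eta] at this
    omega
  have hall := erdosGallaiAt_of_erdosGallaiAt_le hanti f hsmall hEG
  exact ⟨fun t _ _ => hall t, graphic_of_forall_erdosGallaiAt hanti heven hall⟩
end
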